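/- arXiv:math/9809169 — 6 statements merged into one kernel-verified Lean document; each statement's English description precedes it below -/
import Mathlib

section
/- Define f, g : ℝ → ℝ by f(x) = exp(1/x) and g(x) = exp(−1/x²) for x < 0, and f(x) = g(x) = 0 for x ≥ 0. Let F ⊆ ℝ² be the union of the graphs of f and −f, and G ⊆ ℝ² the union of the graphs of g and −g. Then there exists no C¹ diffeomorphism φ : ℝ² → ℝ² (a bijection which is continuously differentiable with continuously differentiable inverse) such that φ(F) = G. -/
/-
A C¹ diffeomorphism is bi-Lipschitz near every point, and it carries `F` onto `G` as a
homeomorphism of pairs. Removing the origin cuts `G` into three pieces (labelled by the sign of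
the second coordinate), while removing any other point cuts `F` into at most two; hence `φ` fixes
the origin and maps the three branches of `F` to those of `G`. At distance `r` from the origin
the branches of `F` are `exp (-1/r)` apart, whereas the points `(-1/t, ±exp (-t²))` of `G` are
only `2 exp (-t²)` apart. Their preimages lie on different branches of `F` at distance `≳ 1/t`
from the origin, so they are `≳ exp (-K t)` apart, yet the inverse map, being Lipschitz, keeps
them within `O (exp (-t²))`: impossible for large `t`.
-/

/-- `f x = exp (1/x)` for `x < 0`, and `0` for `x ≥ 0`. -/
noncomputable def f (x : ℝ) : ℝ := if x < 0 then Real.exp (1 / x) else 0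

/-- `g x = exp (-1/x²)` for `x < 0`, and `0` for `x ≥ 0`. -/
noncomputable def g (x : ℝ) : ℝ := if x < 0 then Real.exp (-1 / x ^ 2) else 0

/-- `F` is the union of the graphs of `f` and `-f`. -/
noncomputable def F : Set (ℝ × ℝ) := {p | p.2 = f p.1 ∨ p.2 = -f p.1}

/-- `G` is the union of the graphs of `g` and `-g`. -/
noncomputable def G : Set (ℝ × ℝ) := {p | p.2 = g p.1 ∨ p.2 = -g p.1}

open Real Set Filter Topology Function

lemma expNegInvGlue_le_abs (y : ℝ) : expNegInvGlue y ≤ |y| := by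
  rcases le_or_gt y 0 with hy | hy
  · rw [expNegInvGlue.zero_of_nonpos hy]; exact abs_nonneg y
  · rw [expNegInvGlue, if_neg hy.not_ge, abs_of_pos hy, exp_neg,
      inv_le_comm₀ (exp_pos _) hy]
    linarith [add_one_le_exp y⁻¹]

lemma f_eq_expNegInvGlue_neg (x : ℝ) : f x = expNegInvGlue (-x) := by
  unfold f expNegInvGlue
  split_ifs <;> first | linarith | simp [one_div]

lemma f_nonneg (x : ℝ) : 0 ≤ f x := f_eq_expNegInvGlue_neg x ▸ expNegInvGlue.nonneg _

lemma f_pos {x : ℝ} (hx : x < 0) : 0 < f x := by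
  rw [f]; simp [hx, exp_pos]

lemma f_of_nonneg {x : ℝ} (hx : 0 ≤ x) : f x = 0 := if_neg hx.not_gt

lemma f_le_abs (x : ℝ) : f x ≤ |x| := by
  simpa [f_eq_expNegInvGlue_neg] using expNegInvGlue_le_abs (-x)

lemma continuous_f : Continuous f := by
  rw [show f = expNegInvGlue ∘ Neg.neg from funext f_eq_expNegInvGlue_neg]
  exact (expNegInvGlue.contDiff (n := 0)).continuous.comp continuous_neg

lemma g_nonneg (x : ℝ) : 0 ≤ g x := by
  rw [g]; split_ifs <;> simp [exp_nonneg]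

lemma g_pos {x : ℝ} (hx : x < 0) : 0 < g x := by
  rw [g]; simp [hx, exp_pos]

lemma g_of_nonneg {x : ℝ} (hx : 0 ≤ x) : g x = 0 := if_neg hx.not_gt

lemma mem_F_iff {p : ℝ × ℝ} : p ∈ F ↔ |p.2| = f p.1 := (abs_eq (f_nonneg _)).symm

lemma mem_G_iff {p : ℝ × ℝ} : p ∈ G ↔ |p.2| = g p.1 := (abs_eq (g_nonneg _)).symm

lemma fst_neg_of_mem_F {p : ℝ × ℝ} (hp : p ∈ F) (hp2 : p.2 ≠ 0) : p.1 < 0 := by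
  by_contra! hp1
  exact hp2 (abs_eq_zero.1 ((mem_F_iff.1 hp).trans (f_of_nonneg hp1)))

lemma norm_eq_abs_fst_of_mem_F {p : ℝ × ℝ} (hp : p ∈ F) : ‖p‖ = |p.1| := by
  rw [Prod.norm_def, Real.norm_eq_abs, Real.norm_eq_abs, mem_F_iff.1 hp]
  exact max_eq_left (f_le_abs _)

lemma abs_le_abs_sub_of_sign_ne {a b : ℝ} (h : SignType.sign a ≠ SignType.sign b) :
    |a| ≤ |a - b| := by
  have hab : a * b ≤ 0 := by
    by_contra! hab
    rcases mul_pos_iff.1 hab with ⟨ha, hb⟩ | ⟨ha, hb⟩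
    · exact h (by rw [sign_pos ha, sign_pos hb])
    · exact h (by rw [sign_neg ha, sign_neg hb])
  exact sq_le_sq.1 (by nlinarith)

lemma exp_neg_le_norm_sub_of_sign_snd_ne {p q : ℝ × ℝ} (hp : p ∈ F) (hq : q ∈ F)
    (hpq : SignType.sign p.2 ≠ SignType.sign q.2) {s : ℝ} (hps : 1 ≤ s * ‖p‖)
    (hqs : 1 ≤ s * ‖q‖) : exp (-s) ≤ ‖p - q‖ := by
  wlog hp2 : p.2 ≠ 0 generalizing p q
  · rw [norm_sub_rev]
    refine this hq hp hpq.symm hqs hps fun hq2 => hpq ?_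
    rw [not_not.1 hp2, hq2]
  have hp1 := fst_neg_of_mem_F hp hp2
  rw [norm_eq_abs_fst_of_mem_F hp, abs_of_neg hp1] at hps
  calc exp (-s) ≤ f p.1 := by
        rw [f, if_pos hp1]
        exact exp_le_exp.2 ((le_div_iff_of_neg hp1).2 (by linarith))
    _ = |p.2| := (mem_F_iff.1 hp).symm
    _ ≤ |(p - q).2| := abs_le_abs_sub_of_sign_ne hpq
    _ ≤ ‖p - q‖ := (Real.norm_eq_abs _).symm.trans_le (norm_snd_le _)

lemma isPreconnected_graphOn {h : ℝ → ℝ} (hh : Continuous h) {I : Set ℝ}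
    (hI : IsPreconnected I) : IsPreconnected (graphOn h I) :=
  hI.image _ (continuous_id.prodMk hh).continuousOn

lemma graphOn_subset_F_diff_zero {h : ℝ → ℝ} {I : Set ℝ} (hh : ∀ x ∈ I, |h x| = f x)
    (hI : (0 : ℝ) ∉ I) : graphOn h I ⊆ F \ {0} := by
  intro p hp
  rw [mem_graphOn] at hp
  refine ⟨mem_F_iff.2 (hp.2 ▸ hh _ hp.1), fun hp0 => ?_⟩
  obtain rfl := mem_singleton_iff.1 hp0
  exact hI hp.1

lemma mem_graphOn_f_of_snd_pos {p : ℝ × ℝ} (hp : p ∈ F) (hp2 : 0 < p.2) :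
    p ∈ graphOn f (Iio 0) :=
  mem_graphOn.2 ⟨fst_neg_of_mem_F hp hp2.ne', by rw [← mem_F_iff.1 hp, abs_of_pos hp2]⟩

lemma mem_graphOn_neg_f_of_snd_neg {p : ℝ × ℝ} (hp : p ∈ F) (hp2 : p.2 < 0) :
    p ∈ graphOn (-f) (Iio 0) :=
  mem_graphOn.2 ⟨fst_neg_of_mem_F hp hp2.ne, by simp [← mem_F_iff.1 hp, abs_of_neg hp2]⟩

lemma mem_graphOn_zero_of_snd_eq_zero {p : ℝ × ℝ} (hp : p ∈ F \ {0}) (hp2 : p.2 = 0) :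
    p ∈ graphOn 0 (Ioi 0) := by
  refine mem_graphOn.2
    ⟨mem_Ioi.2 <| lt_of_le_of_ne (not_lt.1 fun hp1 => ?_) fun hp1 => ?_, hp2.symm⟩
  · exact (f_pos hp1).ne' (by rw [← mem_F_iff.1 hp.1, hp2, abs_zero])
  · exact hp.2 (Prod.ext hp1.symm hp2)

lemma exists_isPreconnected_of_sign_snd_eq {a b : ℝ × ℝ} (ha : a ∈ F \ {0})
    (hb : b ∈ F \ {0}) (hab : SignType.sign a.2 = SignType.sign b.2) :
    ∃ S ⊆ F \ {0}, IsPreconnected S ∧ a ∈ S ∧ b ∈ S := by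
  rcases lt_trichotomy a.2 0 with ha2 | ha2 | ha2
  · have hb2 : b.2 < 0 := by rwa [sign_neg ha2, eq_comm, sign_eq_neg_one_iff] at hab
    exact ⟨graphOn (-f) (Iio 0),
      graphOn_subset_F_diff_zero (by simp [abs_of_nonneg (f_nonneg _)]) (by simp),
      isPreconnected_graphOn continuous_f.neg isPreconnected_Iio,
      mem_graphOn_neg_f_of_snd_neg ha.1 ha2, mem_graphOn_neg_f_of_snd_neg hb.1 hb2⟩
  · have hb2 : b.2 = 0 := by
      rwa [ha2, _root_.sign_zero, eq_comm, _root_.sign_eq_zero_iff] at hab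
    exact ⟨graphOn 0 (Ioi 0),
      graphOn_subset_F_diff_zero
        (fun x hx => by rw [Pi.zero_apply, abs_zero, f_of_nonneg (le_of_lt hx)]) (by simp),
      isPreconnected_graphOn continuous_const isPreconnected_Ioi,
      mem_graphOn_zero_of_snd_eq_zero ha ha2, mem_graphOn_zero_of_snd_eq_zero hb hb2⟩
  · have hb2 : 0 < b.2 := by rwa [sign_pos ha2, eq_comm, sign_eq_one_iff] at hab
    exact ⟨graphOn f (Iio 0),
      graphOn_subset_F_diff_zero (by simp [abs_of_nonneg (f_nonneg _)]) (by simp),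
      isPreconnected_graphOn continuous_f isPreconnected_Iio,
      mem_graphOn_f_of_snd_pos ha.1 ha2, mem_graphOn_f_of_snd_pos hb.1 hb2⟩

lemma F_diff_eq_of_fst_neg {h : ℝ → ℝ} (hh : ∀ x, |h x| = f x) {t : ℝ} (ht : t < 0) :
    F \ {(t, h t)} = graphOn h (Iio t) ∪ (graphOn h (Ioi t) ∪ graphOn (-h) univ) := by
  have hht : h t ≠ 0 := fun h0 => (f_pos ht).ne' (by rw [← hh, h0, abs_zero])
  ext ⟨x, y⟩
  simp only [Set.mem_sdiff, mem_F_iff, ← hh x, abs_eq_abs, mem_singleton_iff, Prod.mk.injEq,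
    mem_union, mem_graphOn, mem_Iio, mem_Ioi, mem_univ, true_and, Pi.neg_apply]
  constructor
  · rintro ⟨rfl | rfl, hne⟩
    · rcases lt_trichotomy x t with hxt | rfl | hxt
      · exact Or.inl ⟨hxt, rfl⟩
      · exact absurd ⟨rfl, rfl⟩ hne
      · exact Or.inr (Or.inl ⟨hxt, rfl⟩)
    · exact Or.inr (Or.inr rfl)
  · rintro (⟨hxt, rfl⟩ | ⟨hxt, rfl⟩ | rfl)
    · exact ⟨Or.inl rfl, fun hx => hxt.ne hx.1⟩
    · exact ⟨Or.inl rfl, fun hx => hxt.ne' hx.1⟩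
    · refine ⟨Or.inr rfl, fun ⟨hx, hy⟩ => hht ?_⟩
      subst hx
      linarith

lemma F_diff_eq_of_fst_pos {t : ℝ} (ht : 0 < t) :
    F \ {(t, 0)} = graphOn f (Ioi t) ∪ (graphOn f (Iio t) ∪ graphOn (-f) (Iio t)) := by
  ext ⟨x, y⟩
  simp only [Set.mem_sdiff, mem_F_iff, mem_singleton_iff, Prod.mk.injEq, mem_union, mem_graphOn,
    mem_Iio, mem_Ioi, Pi.neg_apply]
  constructor
  · rintro ⟨hy, hne⟩
    rcases lt_trichotomy x t with hxt | rfl | hxt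
    · rcases (abs_eq (f_nonneg x)).1 hy with rfl | rfl
      · exact Or.inr (Or.inl ⟨hxt, rfl⟩)
      · exact Or.inr (Or.inr ⟨hxt, rfl⟩)
    · rw [f_of_nonneg ht.le, abs_eq_zero] at hy
      exact absurd ⟨rfl, hy⟩ hne
    · rw [f_of_nonneg (ht.trans hxt).le, abs_eq_zero] at hy
      exact Or.inl ⟨hxt, by rw [hy, f_of_nonneg (ht.trans hxt).le]⟩
  · rintro (⟨hxt, rfl⟩ | ⟨hxt, rfl⟩ | ⟨hxt, rfl⟩)
    · exact ⟨abs_of_nonneg (f_nonneg x), fun hx => hxt.ne' hx.1⟩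
    · exact ⟨abs_of_nonneg (f_nonneg x), fun hx => hxt.ne hx.1⟩
    · exact ⟨by rw [abs_neg, abs_of_nonneg (f_nonneg x)], fun hx => hxt.ne hx.1⟩

lemma exists_isPreconnected_union_eq_F_diff {z : ℝ × ℝ} (hz : z ∈ F) (hz0 : z ≠ 0) :
    ∃ A B : Set (ℝ × ℝ), IsPreconnected A ∧ IsPreconnected B ∧ A ∪ B = F \ {z} := by
  obtain ⟨t, y⟩ := z
  have hy := mem_F_iff.1 hz
  rcases lt_trichotomy t 0 with ht | rfl | ht
  · have key : ∀ h : ℝ → ℝ, Continuous h → (∀ x, |h x| = f x) →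
        ∃ A B : Set (ℝ × ℝ), IsPreconnected A ∧ IsPreconnected B ∧ A ∪ B = F \ {(t, h t)} := by
      intro h hc hh
      have h0 : h 0 = 0 := abs_eq_zero.1 ((hh 0).trans (f_of_nonneg le_rfl))
      refine ⟨_, _, isPreconnected_graphOn hc isPreconnected_Iio,
        (isPreconnected_graphOn hc isPreconnected_Ioi).union (0, 0) ?_ ?_
          (isPreconnected_graphOn hc.neg isPreconnected_univ), (F_diff_eq_of_fst_neg hh ht).symm⟩
      · exact mem_graphOn.2 ⟨ht, h0⟩
      · exact mem_graphOn.2 ⟨mem_univ _, by simp [h0]⟩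
    rcases (abs_eq (f_nonneg t)).1 hy with rfl | rfl
    · exact key f continuous_f fun x => abs_of_nonneg (f_nonneg x)
    · exact key (-f) continuous_f.neg fun x => by simp [abs_of_nonneg (f_nonneg x)]
  · rw [f_of_nonneg le_rfl, abs_eq_zero] at hy
    exact absurd (Prod.ext rfl hy : ((0 : ℝ), y) = 0) hz0
  · rw [f_of_nonneg ht.le, abs_eq_zero] at hy
    subst hy
    refine ⟨_, _, isPreconnected_graphOn continuous_f isPreconnected_Ioi,
      (isPreconnected_graphOn continuous_f isPreconnected_Iio).union (0, 0) ?_ ?_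
        (isPreconnected_graphOn continuous_f.neg isPreconnected_Iio),
      (F_diff_eq_of_fst_pos ht).symm⟩
    · exact mem_graphOn.2 ⟨ht, f_of_nonneg le_rfl⟩
    · exact mem_graphOn.2 ⟨ht, by simp [f_of_nonneg le_rfl]⟩

lemma snd_eq_zero_of_mem_G {p : ℝ × ℝ} (hp : p ∈ G) (hp1 : 0 < p.1) : p.2 = 0 := by
  simpa [g_of_nonneg hp1.le] using mem_G_iff.1 hp

lemma continuousOn_sign_snd_G :
    ContinuousOn (fun p : ℝ × ℝ => SignType.sign p.2) (G \ {0}) := by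
  rintro p ⟨hpG, hp0⟩
  rcases ne_or_eq p.2 0 with hp2 | hp2
  · exact ((continuousAt_sign_of_ne_zero hp2).comp
      continuous_snd.continuousAt).continuousWithinAt
  have hp1 : 0 < p.1 := by
    refine lt_of_le_of_ne (not_lt.1 fun hp1 => ?_) fun hp1 => hp0 (Prod.ext hp1.symm hp2)
    have := mem_G_iff.1 hpG
    rw [hp2, abs_zero] at this
    exact (g_pos hp1).ne this
  -- near a point of the open ray, `G` is the ray itself
  have hray : ∀ᶠ q in 𝓝[G \ {0}] p, SignType.sign q.2 = SignType.sign p.2 := by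
    filter_upwards [nhdsWithin_le_nhds (continuousAt_const.eventually_lt
      continuous_fst.continuousAt hp1), self_mem_nhdsWithin] with q hq1 hqG
    rw [hp2, snd_eq_zero_of_mem_G hqG.1 hq1]
  exact tendsto_const_nhds.congr' (hray.mono fun q hq => hq.symm)

noncomputable def gPoint (ε t : ℝ) : ℝ × ℝ := (-t⁻¹, ε * exp (-t ^ 2))

lemma gPoint_mem_G {ε t : ℝ} (hε : |ε| = 1) (ht : 0 < t) : gPoint ε t ∈ G := by
  rw [mem_G_iff, gPoint, g, if_pos (by simpa using ht), abs_mul, hε, one_mul,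
    abs_of_pos (exp_pos _)]
  congr 1
  field_simp

lemma gPoint_ne_zero (ε : ℝ) {t : ℝ} (ht : 0 < t) : gPoint ε t ≠ 0 :=
  fun h => by simpa [gPoint, ht.ne'] using congrArg Prod.fst h

lemma sign_snd_gPoint (ε t : ℝ) : SignType.sign (gPoint ε t).2 = SignType.sign ε := by
  simp [gPoint, sign_mul, sign_pos (exp_pos _)]

lemma inv_le_norm_gPoint (ε : ℝ) {t : ℝ} (ht : 0 < t) : t⁻¹ ≤ ‖gPoint ε t‖ := by
  simp [gPoint, abs_of_pos ht]

lemma norm_gPoint_sub_gPoint (ε ε' t : ℝ) :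
    ‖gPoint ε t - gPoint ε' t‖ = |ε - ε'| * exp (-t ^ 2) := by
  simp [gPoint, ← sub_mul]
  positivity

lemma tendsto_gPoint (ε : ℝ) : Tendsto (gPoint ε) atTop (𝓝 0) := by
  have hx : Tendsto (fun t : ℝ => -t⁻¹) atTop (𝓝 0) := by
    simpa using (tendsto_inv_atTop_zero (𝕜 := ℝ)).neg
  have hy : Tendsto (fun t : ℝ => ε * exp (-t ^ 2)) atTop (𝓝 0) := by
    simpa using (tendsto_exp_neg_atTop_nhds_zero.comp
      (tendsto_pow_atTop two_ne_zero)).const_mul ε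
  exact hx.prodMk_nhds hy

lemma not_exists_isPreconnected_union_eq_G_diff_zero :
    ¬ ∃ A B : Set (ℝ × ℝ), IsPreconnected A ∧ IsPreconnected B ∧ A ∪ B = G \ {0} := by
  rintro ⟨A, B, hA, hB, hAB⟩
  set σ : ℝ × ℝ → SignType := fun p => SignType.sign p.2
  have hconst : ∀ S ⊆ G \ {0}, IsPreconnected S → (σ '' S).encard ≤ 1 := fun S hS hSc =>
    encard_le_one_iff_subsingleton.2
      (hSc.image σ (continuousOn_sign_snd_G.mono hS)).subsingleton
  have hsurj : σ '' (G \ {0}) = univ := by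
    refine eq_univ_of_forall fun s => ?_
    rcases s with _ | _ | _
    · refine ⟨(1, 0), ⟨mem_G_iff.2 ?_, ?_⟩, ?_⟩ <;> simp [σ, g_of_nonneg]
    · exact ⟨gPoint (-1) 1, ⟨gPoint_mem_G (by simp) one_pos, gPoint_ne_zero _ one_pos⟩,
        by simp [σ, sign_snd_gPoint]⟩
    · exact ⟨gPoint 1 1, ⟨gPoint_mem_G (by simp) one_pos, gPoint_ne_zero _ one_pos⟩,
        by simp [σ, sign_snd_gPoint]⟩
  have : (3 : ℕ∞) ≤ 2 := calc
    (3 : ℕ∞) = (univ : Set SignType).encard := by simp; rfl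
    _ = (σ '' A ∪ σ '' B).encard := by rw [← hsurj, ← hAB, image_union]
    _ ≤ (σ '' A).encard + (σ '' B).encard := encard_union_le _ _
    _ ≤ 1 + 1 := add_le_add (hconst A (hAB ▸ subset_union_left) hA)
        (hconst B (hAB ▸ subset_union_right) hB)
  norm_num at this

lemma LipschitzOnWith.norm_le_mul_norm {E E' : Type*} [SeminormedAddCommGroup E]
    [SeminormedAddCommGroup E'] {K : NNReal} {φ : E → E'} {s : Set E}
    (hφ : LipschitzOnWith K φ s) (h0 : 0 ∈ s) (hφ0 : φ 0 = 0) {x : E} (hx : x ∈ s) :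
    ‖φ x‖ ≤ K * ‖x‖ := by
  simpa [hφ0] using hφ.norm_sub_le hx h0

lemma eventually_mul_exp_neg_sq_lt_exp_neg_mul (a b : ℝ) :
    ∀ᶠ t in atTop, a * exp (-t ^ 2) < exp (-(b * t)) := by
  filter_upwards [eventually_ge_atTop (max a (b + 1)), eventually_ge_atTop 0] with t htab ht0
  have hexp : a < exp (t ^ 2 - b * t) := by
    have : t ≤ t ^ 2 - b * t := by nlinarith [le_max_right a (b + 1)]
    linarith [add_one_le_exp (t ^ 2 - b * t), le_max_left a (b + 1)]
  calc a * exp (-t ^ 2) < exp (t ^ 2 - b * t) * exp (-t ^ 2) :=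
        mul_lt_mul_of_pos_right hexp (exp_pos _)
    _ = exp (-(b * t)) := by rw [← exp_add]; ring_nf

lemma map_zero_of_image_F_eq_G {φ : ℝ × ℝ → ℝ × ℝ} (hφ : Continuous φ) (hinj : Injective φ)
    (himg : φ '' F = G) : φ 0 = 0 := by
  obtain ⟨z, hzF, hz⟩ : (0 : ℝ × ℝ) ∈ φ '' F := himg ▸ mem_G_iff.2 (by simp [g_of_nonneg])
  obtain rfl : z = 0 := by
    by_contra hz0
    obtain ⟨A, B, hA, hB, hAB⟩ := exists_isPreconnected_union_eq_F_diff hzF hz0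
    refine not_exists_isPreconnected_union_eq_G_diff_zero
      ⟨φ '' A, φ '' B, hA.image _ hφ.continuousOn, hB.image _ hφ.continuousOn, ?_⟩
    rw [← image_union, hAB, image_sdiff hinj, image_singleton, himg, hz]
  exact hz

lemma sign_snd_map_eq_of_sign_snd_eq {φ : ℝ × ℝ → ℝ × ℝ} (hφ : Continuous φ)
    (himg : φ '' (F \ {0}) ⊆ G \ {0}) {a b : ℝ × ℝ} (ha : a ∈ F \ {0}) (hb : b ∈ F \ {0})
    (hab : SignType.sign a.2 = SignType.sign b.2) :
    SignType.sign (φ a).2 = SignType.sign (φ b).2 := by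
  obtain ⟨S, hSF, hS, haS, hbS⟩ := exists_isPreconnected_of_sign_snd_eq ha hb hab
  exact (hS.image φ hφ.continuousOn).constant (continuousOn_sign_snd_G.mono
    ((image_mono hSF).trans himg)) (mem_image_of_mem φ haS) (mem_image_of_mem φ hbS)

lemma exp_neg_mul_le_norm_sub {φ : ℝ × ℝ → ℝ × ℝ} (hφ : Continuous φ)
    (himg : φ '' (F \ {0}) ⊆ G \ {0}) {K : NNReal} {U : Set (ℝ × ℝ)}
    (hφU : LipschitzOnWith K φ U) (hU : 0 ∈ U) (hφ0 : φ 0 = 0) {p q : ℝ × ℝ}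
    (hp : p ∈ F \ {0}) (hq : q ∈ F \ {0}) (hpU : p ∈ U) (hqU : q ∈ U) {t : ℝ} (ht : 0 < t)
    (hφp : φ p = gPoint 1 t) (hφq : φ q = gPoint (-1) t) :
    exp (-(K * t)) ≤ ‖p - q‖ := by
  have hsign : SignType.sign p.2 ≠ SignType.sign q.2 := fun h => by
    simpa [hφp, hφq, sign_snd_gPoint] using sign_snd_map_eq_of_sign_snd_eq hφ himg hp hq h
  have hfar : ∀ {x : ℝ × ℝ} (ε : ℝ), x ∈ U → φ x = gPoint ε t → 1 ≤ K * t * ‖x‖ :=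
    fun ε hxU hφx => by
      have := (inv_le_norm_gPoint ε ht).trans (hφx ▸ hφU.norm_le_mul_norm hU hφ0 hxU :)
      rwa [inv_le_iff_one_le_mul₀ ht, mul_right_comm] at this
  exact exp_neg_le_norm_sub_of_sign_snd_ne hp.1 hq.1 hsign (hfar 1 hpU hφp)
    (hfar (-1) hqU hφq)

/-- There is no C¹ diffeomorphism of `ℝ²` taking `F` to `G`. -/
theorem no_C1_diffeo_F_to_G :
    ¬ ∃ φ ψ : ℝ × ℝ → ℝ × ℝ,
      ContDiff ℝ 1 φ ∧ ContDiff ℝ 1 ψ ∧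
      Function.LeftInverse ψ φ ∧ Function.RightInverse ψ φ ∧
      φ '' F = G := by
  rintro ⟨φ, ψ, hφ, hψ, hl, hr, himg⟩
  have hφ0 : φ 0 = 0 := map_zero_of_image_F_eq_G hφ.continuous hl.injective himg
  have himg0 : φ '' (F \ {0}) = G \ {0} := by
    rw [image_sdiff hl.injective, himg, image_singleton, hφ0]
  have hψ0 : ψ 0 = 0 := by simpa [hφ0] using hl 0
  obtain ⟨Kφ, U, hU, hφU⟩ := hφ.contDiffAt.exists_lipschitzOnWith (x := 0)
  obtain ⟨Kψ, V, hV, hψV⟩ := hψ.contDiffAt.exists_lipschitzOnWith (x := 0)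
  have hψ_tendsto : ∀ ε, Tendsto (fun t => ψ (gPoint ε t)) atTop (𝓝 0) := fun ε =>
    hψ0 ▸ (hψ.continuous.tendsto 0).comp (tendsto_gPoint ε)
  obtain ⟨t, ht, hcV, hdV, hpU, hqU, hlt⟩ := ((eventually_gt_atTop 0).and <|
    ((tendsto_gPoint 1).eventually_mem hV).and <|
    ((tendsto_gPoint (-1)).eventually_mem hV).and <|
    ((hψ_tendsto 1).eventually_mem hU).and <| ((hψ_tendsto (-1)).eventually_mem hU).and <|
    eventually_mul_exp_neg_sq_lt_exp_neg_mul (Kψ * 2) Kφ).exists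
  have hF : ∀ ε : ℝ, |ε| = 1 → ψ (gPoint ε t) ∈ F \ {0} := fun ε hε => by
    rw [← hl.image_image (F \ {0}), himg0]
    exact mem_image_of_mem ψ ⟨gPoint_mem_G hε ht, gPoint_ne_zero ε ht⟩
  have hfar := exp_neg_mul_le_norm_sub hφ.continuous himg0.subset hφU (mem_of_mem_nhds hU) hφ0
    (hF 1 (by simp)) (hF (-1) (by simp)) hpU hqU ht (hr _) (hr _)
  have hnear := hψV.norm_sub_le hcV hdV
  rw [norm_gPoint_sub_gPoint, show |(1 : ℝ) - -1| = 2 by norm_num, ← mul_assoc] at hnear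
  exact hlt.not_ge (hfar.trans hnear)
end

section
/- Let f be a C^∞ real-valued function on an open interval containing 0 with f(0) = 0, f'(0) = 0 and f''(0) > 0. Then there exist δ > 0 and a C^∞ function σ : (−δ, δ) → ℝ such that: σ(0) = 0; σ'(0) = −1; x·σ(x) < 0 for all x with 0 < |x| < δ; f(σ(x)) = f(x) for all |x| < δ; and σ(σ(x)) = x for all x in some neighbourhood of 0. In other words, the involution defined near the tangency point by following the horizontal leaves from the graph of f to itself is a C^∞ diffeomorphism. -/
open Set Filter Topology
open scoped ContDiff

theorem leafwise_aux_hasDerivAt (k : ℕ) (H : ℝ → ℝ) (hH : ContDiff ℝ ∞ H) (x0 : ℝ) :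
    HasDerivAt (fun x => ∫ t in (0:ℝ)..1, t ^ k * H (t * x))
      (∫ t in (0:ℝ)..1, t ^ (k + 1) * deriv H (t * x0)) x0 := by
  have hHc : Continuous H := hH.continuous
  have hH'c : Continuous (deriv H) := hH.continuous_deriv (by simp)
  obtain ⟨C, hC⟩ := (isCompact_closedBall (0:ℝ) (|x0| + 1)).exists_bound_of_continuousOn
    hH'c.continuousOn
  have := intervalIntegral.hasDerivAt_integral_of_dominated_loc_of_deriv_le
    (μ := MeasureTheory.volume) (a := 0) (b := 1)
    (F := fun x t => t ^ k * H (t * x)) (F' := fun x t => t ^ (k + 1) * deriv H (t * x))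
    (x₀ := x0) (bound := fun _ => C) (Metric.ball_mem_nhds x0 one_pos)
    (Eventually.of_forall fun x => (by fun_prop : Continuous fun t : ℝ => t ^ k * H (t * x)).aestronglyMeasurable)
    ((by fun_prop : Continuous fun t : ℝ => t ^ k * H (t * x0)).intervalIntegrable 0 1)
    ((by fun_prop : Continuous fun t : ℝ => t ^ (k + 1) * deriv H (t * x0)).aestronglyMeasurable)
    ?_ intervalIntegrable_const ?_
  · exact this.2
  · refine Eventually.of_forall fun t ht x hx => ?_
    rw [Set.uIoc_of_le zero_le_one] at ht
    have ht0 : 0 ≤ t := ht.1.le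
    have ht1 : t ≤ 1 := ht.2
    have hx' : |x| < |x0| + 1 := by
      rw [Metric.mem_ball, Real.dist_eq] at hx
      have := abs_sub_abs_le_abs_sub x x0
      linarith
    have hmem : t * x ∈ Metric.closedBall (0:ℝ) (|x0| + 1) := by
      rw [Metric.mem_closedBall, Real.dist_eq, sub_zero, abs_mul, abs_of_nonneg ht0]
      nlinarith [abs_nonneg x]
    have hb := hC _ hmem
    have htk : |t ^ (k + 1)| ≤ 1 := by
      rw [abs_of_nonneg (pow_nonneg ht0 _)]; exact pow_le_one₀ ht0 ht1
    rw [Real.norm_eq_abs] at hb ⊢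
    rw [abs_mul]
    calc |t ^ (k + 1)| * |deriv H (t * x)| ≤ 1 * |deriv H (t * x)| :=
          mul_le_mul_of_nonneg_right htk (abs_nonneg _)
      _ ≤ C := by linarith
  · refine Eventually.of_forall fun t _ x _ => ?_
    have h1 : HasDerivAt (fun x => t * x) t x := by
      simpa using (hasDerivAt_id x).const_mul t
    have h2 := ((hH.differentiable (by simp) (t * x)).hasDerivAt.comp x h1).const_mul (t ^ k)
    exact h2.congr_deriv (by ring)

theorem leafwise_aux_contDiff (n : ℕ) : ∀ (k : ℕ) (H : ℝ → ℝ), ContDiff ℝ ∞ H →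
    ContDiff ℝ n (fun x => ∫ t in (0:ℝ)..1, t ^ k * H (t * x)) := by
  induction n with
  | zero =>
    intro k H hH
    rw [show ((0:ℕ) : WithTop ℕ∞) = 0 from rfl, contDiff_zero]
    exact continuous_iff_continuousAt.mpr fun x =>
      (leafwise_aux_hasDerivAt k H hH x).continuousAt
  | succ n ih =>
    intro k H hH
    rw [show ((n + 1 : ℕ) : WithTop ℕ∞) = (n : WithTop ℕ∞) + 1 by push_cast; rfl,
      contDiff_succ_iff_deriv]
    refine ⟨fun x => (leafwise_aux_hasDerivAt k H hH x).differentiableAt, by simp, ?_⟩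
    have he : deriv (fun x => ∫ t in (0:ℝ)..1, t ^ k * H (t * x)) =
        fun x => ∫ t in (0:ℝ)..1, t ^ (k + 1) * deriv H (t * x) :=
      funext fun x => (leafwise_aux_hasDerivAt k H hH x).deriv
    rw [he]
    exact ih (k + 1) (deriv H) (contDiff_infty_iff_deriv.mp hH).2

theorem leafwise_hadamard (F : ℝ → ℝ) (hF : ContDiff ℝ ∞ F) : ContDiff ℝ ∞ (dslope F 0) := by
  have he : dslope F 0 = fun x => ∫ t in (0:ℝ)..1, t ^ 0 * deriv F (t * x) := by
    funext x
    simp only [pow_zero, one_mul]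
    by_cases hx : x = 0
    · subst hx; simp [dslope_same]
    · rw [dslope_of_ne _ hx, slope_def_field, intervalIntegral.integral_comp_mul_right _ hx,
        zero_mul, one_mul, intervalIntegral.integral_deriv_eq_sub
          (fun y _ => hF.differentiable (by simp) y)
          ((hF.continuous_deriv (by simp)).intervalIntegrable _ _), smul_eq_mul, sub_zero]
      field_simp
  rw [he]
  exact contDiff_infty.mpr fun n =>
    leafwise_aux_contDiff n 0 (deriv F) (contDiff_infty_iff_deriv.mp hF).2

theorem leafwise_globalize (a b : ℝ) (ha : a < 0) (hb : 0 < b) (f : ℝ → ℝ)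
    (hf : ContDiffOn ℝ (⊤ : ℕ∞) f (Set.Ioo a b)) :
    ∃ F : ℝ → ℝ, ContDiff ℝ ∞ F ∧ F =ᶠ[𝓝 (0:ℝ)] f := by
  set r : ℝ := min (-a) b with hr
  have hr0 : 0 < r := lt_min (by linarith) hb
  let c : ContDiffBump (0:ℝ) := ⟨r / 4, r / 2, by linarith, by linarith⟩
  refine ⟨fun x => c x * f x, ?_, ?_⟩
  · rw [contDiff_iff_contDiffAt]
    intro x
    by_cases hx : x ∈ Set.Ioo a b
    · exact c.contDiff.contDiffAt.mul (hf.contDiffAt (Ioo_mem_nhds hx.1 hx.2))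
    · have hxs : x ∉ tsupport c := by
        rw [c.tsupport_eq, Metric.mem_closedBall, Real.dist_eq, sub_zero]
        intro hle
        apply hx
        have h1 : r ≤ -a := min_le_left _ _
        have h2 : r ≤ b := min_le_right _ _
        have h3 : c.rOut = r / 2 := rfl
        rw [h3] at hle
        constructor <;> cases abs_le.mp hle <;> linarith
      rw [notMem_tsupport_iff_eventuallyEq] at hxs
      apply contDiffAt_const (c := (0:ℝ)).congr_of_eventuallyEq
      filter_upwards [hxs] with y hy
      simp [hy]
  · filter_upwards [Metric.closedBall_mem_nhds (0:ℝ) (show 0 < r / 4 by linarith)] with y hy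
    rw [c.one_of_mem_closedBall hy, one_mul]

theorem leafwise_dslope_congr (F1 F2 : ℝ → ℝ) (h : F1 =ᶠ[𝓝 (0:ℝ)] F2) :
    dslope F1 0 =ᶠ[𝓝 (0:ℝ)] dslope F2 0 := by
  filter_upwards [h] with x hx
  by_cases hx0 : x = 0
  · subst hx0; rw [dslope_same, dslope_same, h.deriv_eq]
  · rw [dslope_of_ne _ hx0, dslope_of_ne _ hx0, slope_def_field, slope_def_field, hx,
      h.self_of_nhds]


/-- The involution obtained by following the horizontal leaves near a simple positive
tangency is a `C^∞` diffeomorphism: if `f` is `C^∞` near `0` with `f 0 = 0`,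
`f' 0 = 0` and `f'' 0 > 0`, then there is a `C^∞` function `σ` near `0` with
`σ 0 = 0`, `σ' 0 = -1`, `σ x` on the opposite side of `0` from `x`,
`f (σ x) = f x`, and `σ ∘ σ = id` near `0`. -/
theorem leafwise_involution_smooth (a b : ℝ) (ha : a < 0) (hb : 0 < b)
    (f : ℝ → ℝ) (hf : ContDiffOn ℝ (⊤ : ℕ∞) f (Set.Ioo a b))
    (hf0 : f 0 = 0) (hf'0 : deriv f 0 = 0) (hf''0 : 0 < deriv (deriv f) 0) :
    ∃ δ > (0 : ℝ), ∃ σ : ℝ → ℝ,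
      ContDiffOn ℝ (⊤ : ℕ∞) σ (Set.Ioo (-δ) δ) ∧
      σ 0 = 0 ∧
      deriv σ 0 = -1 ∧
      (∀ x : ℝ, 0 < |x| → |x| < δ → x * σ x < 0) ∧
      (∀ x : ℝ, |x| < δ → f (σ x) = f x) ∧
      ∃ ε > (0 : ℝ), ∀ x : ℝ, |x| < ε → σ (σ x) = x := by
  -- f is analytic at 0
  obtain ⟨F, hF, hFf⟩ := leafwise_globalize a b ha hb f hf
  set g : ℝ → ℝ := dslope f 0 with hg_def
  set G : ℝ → ℝ := dslope g 0 with hG_def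
  have hF1 : ContDiff ℝ ∞ (dslope F 0) := leafwise_hadamard F hF
  have hF2 : ContDiff ℝ ∞ (dslope (dslope F 0) 0) := leafwise_hadamard _ hF1
  have hgF : g =ᶠ[𝓝 (0:ℝ)] dslope F 0 := leafwise_dslope_congr f F hFf.symm
  have hGF : G =ᶠ[𝓝 (0:ℝ)] dslope (dslope F 0) 0 := leafwise_dslope_congr g _ hgF
  have Eg : ∀ᶠ x in 𝓝 (0:ℝ), ContDiffAt ℝ ∞ g x :=
    hgF.eventuallyEq_nhds.mono fun x hx => hF1.contDiffAt.congr_of_eventuallyEq hx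
  have EG : ∀ᶠ x in 𝓝 (0:ℝ), ContDiffAt ℝ ∞ G x :=
    hGF.eventuallyEq_nhds.mono fun x hx => hF2.contDiffAt.congr_of_eventuallyEq hx
  have Ag : ContDiffAt ℝ ∞ g 0 := Eg.self_of_nhds
  have AG : ContDiffAt ℝ ∞ G 0 := EG.self_of_nhds
  have hg0 : g 0 = 0 := by
    rw [hg_def, dslope_same]; exact hf'0
  have h1 : ∀ x : ℝ, f x = x * g x := by
    intro x
    have h := sub_smul_dslope f 0 x
    rw [sub_zero, hf0, sub_zero, smul_eq_mul] at h
    exact h.symm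
  have h2 : ∀ x : ℝ, g x = x * G x := by
    intro x
    have h := sub_smul_dslope g 0 x
    rw [sub_zero, hg0, sub_zero, smul_eq_mul] at h
    exact h.symm
  -- compute deriv (deriv f) 0 = 2 * deriv g 0
  have Adg : ContDiffAt ℝ ∞ (deriv g) 0 :=
    (contDiff_infty_iff_deriv.mp hF1).2.contDiffAt.congr_of_eventuallyEq hgF.deriv
  have E5 : deriv f =ᶠ[𝓝 (0:ℝ)] fun x => g x + x * deriv g x := by
    filter_upwards [Eg] with x hx
    have hfx : HasDerivAt f (1 * g x + x * deriv g x) x := by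
      have h' := (hasDerivAt_id x).mul (hx.differentiableAt (by simp)).hasDerivAt
      have hfe : f = fun y => y * g y := funext h1
      rw [hfe]
      exact h'
    rw [hfx.deriv]; ring
  have dg0 : HasDerivAt g (deriv g 0) 0 := (Ag.differentiableAt (by simp)).hasDerivAt
  have ddg0 : HasDerivAt (deriv g) (deriv (deriv g) 0) 0 := (Adg.differentiableAt (by simp)).hasDerivAt
  have hD : HasDerivAt (fun x => g x + x * deriv g x)
      (deriv g 0 + (1 * deriv g 0 + 0 * deriv (deriv g) 0)) 0 := by
    have := dg0.add ((hasDerivAt_id 0).mul ddg0)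
    exact this
  have hff : deriv (deriv f) 0 = 2 * deriv g 0 := by
    rw [E5.deriv_eq, hD.deriv]; ring
  have hG0 : G 0 = deriv g 0 := dslope_same g 0
  have hG0pos : 0 < G 0 := by rw [hG0]; linarith
  -- the half-square-root map h
  set s0 : ℝ := Real.sqrt (G 0) with hs0_def
  have hs0 : 0 < s0 := Real.sqrt_pos.mpr hG0pos
  have EGpos : ∀ᶠ x in 𝓝 (0:ℝ), 0 < G x :=
    Filter.Tendsto.eventually AG.continuousAt (eventually_gt_nhds hG0pos)
  set h : ℝ → ℝ := fun x => x * Real.sqrt (G x) with hh_def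
  have Eh : ∀ᶠ x in 𝓝 (0:ℝ), ContDiffAt ℝ ∞ h x := by
    filter_upwards [EG, EGpos] with x hx hxp
    exact contDiffAt_id.mul ((Real.contDiffAt_sqrt hxp.ne').comp x hx)
  have hh0 : ContDiffAt ℝ ∞ h 0 := Eh.self_of_nhds
  have h00 : h 0 = 0 := by simp [hh_def]
  have hdG : DifferentiableAt ℝ (fun x => Real.sqrt (G x)) 0 :=
    ((Real.contDiffAt_sqrt hG0pos.ne').comp 0 AG).differentiableAt (by simp : (∞ : WithTop ℕ∞) ≠ 0)
  have hd : HasDerivAt h s0 0 := by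
    have := (hasDerivAt_id 0).mul hdG.hasDerivAt
    simp at this; exact this
  have hderiv0 : deriv h 0 = s0 := hd.deriv
  have hs : HasStrictDerivAt h (deriv h 0) 0 := hh0.hasStrictDerivAt (by simp)
  have hne : deriv h 0 ≠ 0 := by rw [hderiv0]; exact hs0.ne'
  set P := HasStrictFDerivAt.toOpenPartialHomeomorph h (hs.hasStrictFDerivAt_equiv hne) with hP_def
  have hPcoe : ∀ x, P x = h x := fun x => rfl
  have h0src : (0:ℝ) ∈ P.source :=
    HasStrictFDerivAt.mem_toOpenPartialHomeomorph_source (hs.hasStrictFDerivAt_equiv hne)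
  have h0tgt : (0:ℝ) ∈ P.target := by
    have := HasStrictFDerivAt.image_mem_toOpenPartialHomeomorph_target (hs.hasStrictFDerivAt_equiv hne)
    rwa [h00] at this
  have hsymm0 : P.symm 0 = 0 := by
    have := P.left_inv h0src
    rwa [hPcoe, h00] at this
  have hcontsymm : ContinuousAt (⇑P.symm) 0 :=
    P.symm.continuousAt (by rwa [OpenPartialHomeomorph.symm_source])
  -- deriv h is nonzero near 0
  obtain ⟨U, hU_sub, hU_open, hU0⟩ := mem_nhds_iff.mp Eh
  have hhU : ContDiffOn ℝ ∞ h U := by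
    intro x hx
    have hx' : ContDiffAt ℝ ∞ h x := hU_sub hx
    exact hx'.contDiffWithinAt
  have hcd : ContinuousOn (deriv h) U := hhU.continuousOn_deriv_of_isOpen hU_open (by simp)
  have hcd0 : ContinuousAt (deriv h) 0 := hcd.continuousAt (hU_open.mem_nhds hU0)
  have Ehne : ∀ᶠ x in 𝓝 (0:ℝ), deriv h x ≠ 0 := hcd0.eventually_ne hne
  -- P.symm is analytic near 0
  have Etgt : ∀ᶠ y in 𝓝 (0:ℝ), y ∈ P.target := P.open_target.mem_nhds h0tgt
  have hcontsymm' : Filter.Tendsto (⇑P.symm) (𝓝 (0:ℝ)) (𝓝 (0:ℝ)) := by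
    nth_rewrite 2 [← hsymm0]; exact hcontsymm
  have Esymm : ∀ᶠ y in 𝓝 (0:ℝ), ContDiffAt ℝ ∞ (⇑P.symm) y := by
    have hpull : ∀ᶠ y in 𝓝 (0:ℝ),
        ContDiffAt ℝ ∞ h (P.symm y) ∧ deriv h (P.symm y) ≠ 0 :=
      Filter.Tendsto.eventually hcontsymm' (Eh.and Ehne)
    filter_upwards [hpull, Etgt] with y hy hyt
    exact P.contDiffAt_symm_deriv hy.2 hyt (hy.1.differentiableAt (by simp)).hasDerivAt hy.1
  -- the involution σ
  set σ : ℝ → ℝ := fun x => P.symm (-h x) with hσ_def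
  have hneg0 : -h 0 = 0 := by rw [h00, neg_zero]
  have hconth : Filter.Tendsto (fun x => -h x) (𝓝 (0:ℝ)) (𝓝 (0:ℝ)) := by
    have hc : ContinuousAt (fun x => -h x) 0 := (hh0.continuousAt).neg
    nth_rewrite 2 [← hneg0]; exact hc
  have Eσ : ∀ᶠ x in 𝓝 (0:ℝ), ContDiffAt ℝ ∞ σ x := by
    have E' : ∀ᶠ x in 𝓝 (0:ℝ), ContDiffAt ℝ ∞ (⇑P.symm) (-h x) :=
      Filter.Tendsto.eventually hconth Esymm
    filter_upwards [Eh, E'] with x hx1 hx2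
    exact hx2.comp x hx1.neg
  have hσ0 : σ 0 = 0 := by rw [hσ_def]; simp only; rw [h00, neg_zero, hsymm0]
  -- inverse identities
  have Ev1 : ∀ᶠ x in 𝓝 (0:ℝ), P.symm (h x) = x := P.eventually_left_inverse h0src
  have Ev2 : ∀ᶠ y in 𝓝 (0:ℝ), h (P.symm y) = y := by
    have := P.eventually_right_inverse' h0src
    rw [hPcoe, h00] at this
    exact this
  have Ev2' : ∀ᶠ x in 𝓝 (0:ℝ), h (σ x) = -h x :=
    Filter.Tendsto.eventually hconth Ev2
  have hcontσ : Filter.Tendsto σ (𝓝 (0:ℝ)) (𝓝 (0:ℝ)) := by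
    have hc : ContinuousAt σ 0 := Eσ.self_of_nhds.continuousAt
    nth_rewrite 2 [← hσ0]; exact hc
  have Eσpos : ∀ᶠ x in 𝓝 (0:ℝ), 0 < G (σ x) :=
    Filter.Tendsto.eventually (p := fun y => 0 < G y) hcontσ EGpos
  -- derivative of σ at 0
  have hPsymm : HasStrictDerivAt (⇑P.symm) (deriv h 0)⁻¹ (h 0) := hs.to_localInverse hne
  have hPd : HasDerivAt (⇑P.symm) s0⁻¹ (-h 0) := by
    rw [hneg0]
    have := hPsymm.hasDerivAt
    rw [hderiv0, h00] at this
    exact this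
  have hσd : HasDerivAt σ (s0⁻¹ * -s0) 0 := HasDerivAt.comp 0 hPd hd.neg
  have hderivσ : deriv σ 0 = -1 := by
    rw [hσd.deriv]; field_simp
  -- the square identity
  have hsq : ∀ y : ℝ, 0 ≤ G y → f y = h y ^ 2 := by
    intro y hy
    have : h y ^ 2 = y ^ 2 * G y := by
      rw [hh_def]; simp only
      rw [mul_pow, Real.sq_sqrt hy]
    rw [this, h1 y, h2 y]; ring
  -- bundle eventual facts and extract δ
  have key : ∀ᶠ x in 𝓝 (0:ℝ),
      ContDiffAt ℝ ∞ σ x ∧ 0 < G x ∧ 0 < G (σ x) ∧ h (σ x) = -h x := by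
    filter_upwards [Eσ, EGpos, Eσpos, Ev2'] with x k1 k2 k3 k4
    exact ⟨k1, k2, k3, k4⟩
  obtain ⟨δ, hδpos, hδ⟩ := Metric.eventually_nhds_iff.mp key
  have habs : ∀ x : ℝ, |x| < δ →
      ContDiffAt ℝ ∞ σ x ∧ 0 < G x ∧ 0 < G (σ x) ∧ h (σ x) = -h x := by
    intro x hx
    exact hδ (by rwa [Real.dist_eq, sub_zero])
  refine ⟨δ, hδpos, σ, ?_, hσ0, hderivσ, ?_, ?_, ?_⟩
  · -- smoothness
    intro x hx
    have hx' : |x| < δ := abs_lt.mpr ⟨by linarith [hx.1], hx.2⟩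
    exact (habs x hx').1.contDiffWithinAt
  · -- sign
    intro x hx0 hx
    obtain ⟨-, hGx, hGσ, hhσ⟩ := habs x hx
    have s1 : 0 < Real.sqrt (G x) := Real.sqrt_pos.mpr hGx
    have s2 : 0 < Real.sqrt (G (σ x)) := Real.sqrt_pos.mpr hGσ
    have heq : σ x * Real.sqrt (G (σ x)) = -(x * Real.sqrt (G x)) := hhσ
    rcases lt_or_gt_of_ne (fun h' : x = 0 => by simp [h'] at hx0) with hxneg | hxpos
    · have : 0 < σ x := by nlinarith
      nlinarith
    · have : σ x < 0 := by nlinarith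
      nlinarith
  · -- f (σ x) = f x
    intro x hx
    obtain ⟨-, hGx, hGσ, hhσ⟩ := habs x hx
    rw [hsq _ hGσ.le, hsq _ hGx.le, hhσ, neg_pow]
    ring
  · -- involution
    have Efin : ∀ᶠ x in 𝓝 (0:ℝ), σ (σ x) = x := by
      filter_upwards [Ev1, Ev2'] with x e1 e2
      show P.symm (-h (σ x)) = x
      rw [e2, neg_neg]; exact e1
    obtain ⟨ε, hεpos, hε⟩ := Metric.eventually_nhds_iff.mp Efin
    exact ⟨ε, hεpos, fun x hx => hε (by rwa [Real.dist_eq, sub_zero])⟩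
end

section
/- Let h : ℝ → ℝ be a C^∞ function with h(x) > 0 for x < 0 and h(x) = 0 for x ≥ 0. Let v = (v₁, v₂, v₃) : ℝ³ → ℝ³ be a C¹ vector field which is tangent to both sheets Σ₁ = {(x,y,0) : x,y ∈ ℝ} and Σ₂ = {(x,y,h(x)) : x,y ∈ ℝ}, i.e. v₃(x,y,0) = 0 for all x,y and v₃(x,y,h(x)) = h'(x)·v₁(x,y,h(x)) for all x,y. Then along the branching locus the field is null or tangent to the branching locus: v₁(0,y,0) = 0 for every y ∈ ℝ. -/
/-- A vanishing result for vector fields tangent to a branched surface: if `h` is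
`C^∞` with `h x > 0` for `x < 0` and `h x = 0` for `x ≥ 0`, and the `C¹` vector
field `v = (v₁, v₂, v₃)` on `ℝ³` is tangent to both sheets
`Σ₁ = {(x,y,0)}` and `Σ₂ = {(x,y,h x)}` of the local model of a branched surface,
then along the branching locus `{(0,y,0)}` the field is null or tangent to it:
`v₁ (0,y,0) = 0` for every `y`. -/
theorem tangent_field_vanishes_on_branch_locus
    (h : ℝ → ℝ) (hh : ContDiff ℝ (⊤ : ℕ∞) h)
    (hpos : ∀ x : ℝ, x < 0 → 0 < h x) (hzero : ∀ x : ℝ, 0 ≤ x → h x = 0)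
    (v : ℝ × ℝ × ℝ → ℝ × ℝ × ℝ) (hv : ContDiff ℝ 1 v)
    (htan₁ : ∀ x y : ℝ, (v (x, y, 0)).2.2 = 0)
    (htan₂ : ∀ x y : ℝ, (v (x, y, h x)).2.2 = deriv h x * (v (x, y, h x)).1) :
    ∀ y : ℝ, (v (0, y, 0)).1 = 0 := by
  intro y
  by_contra hc
  set c : ℝ := (v (0, y, 0)).1 with hcdef
  have hcpos : 0 < |c| := abs_pos.2 hc
  have hnn : ∀ x, 0 ≤ h x := by
    intro x
    rcases lt_or_ge x 0 with hx | hx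
    · exact (hpos x hx).le
    · exact (hzero x hx).ge
  have h0 : h 0 = 0 := hzero 0 le_rfl
  -- bound R of h on [-1,0]
  obtain ⟨x₀, hx₀mem, hR⟩ := isCompact_Icc.exists_isMaxOn
      (Set.nonempty_Icc.2 (by norm_num : (-1:ℝ) ≤ 0)) hh.continuous.continuousOn
  set R : ℝ := h x₀ with hRdef
  have hRnn : 0 ≤ R := hnn x₀
  -- compact convex box
  set K : Set (ℝ × ℝ × ℝ) := (Set.Icc (-1:ℝ) 0) ×ˢ (({y} : Set ℝ) ×ˢ Set.Icc (0:ℝ) R)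
    with hKdef
  have hKcompact : IsCompact K :=
    isCompact_Icc.prod (isCompact_singleton.prod isCompact_Icc)
  have hKconvex : Convex ℝ K :=
    (convex_Icc _ _).prod ((convex_singleton _).prod (convex_Icc _ _))
  have hmem : ∀ x ∈ Set.Icc (-1:ℝ) 0, ((x, y, h x) : ℝ × ℝ × ℝ) ∈ K := by
    intro x hx
    exact ⟨hx, rfl, hnn x, hR hx⟩
  have hmem0 : ∀ x ∈ Set.Icc (-1:ℝ) 0, ((x, y, 0) : ℝ × ℝ × ℝ) ∈ K := by
    intro x hx
    exact ⟨hx, rfl, le_rfl, hRnn⟩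
  -- bound M on fderiv over K
  have hKne : K.Nonempty := ⟨(0, y, 0), hmem0 0 (by norm_num)⟩
  obtain ⟨p, hpK, hM⟩ := hKcompact.exists_isMaxOn hKne
      ((hv.continuous_fderiv one_ne_zero).norm.continuousOn)
  set M : ℝ := ‖fderiv ℝ v p‖ with hMdef
  have hMnn : 0 ≤ M := norm_nonneg _
  -- key estimate : |v₃(x,y,h x)| ≤ M * h x on [-1,0]
  have key : ∀ x ∈ Set.Icc (-1:ℝ) 0, |(v (x, y, h x)).2.2| ≤ M * h x := by
    intro x hx
    have hdiff : ∀ q ∈ K, DifferentiableAt ℝ v q := fun q _ =>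
      (hv.differentiable one_ne_zero) q
    have hbd : ∀ q ∈ K, ‖fderiv ℝ v q‖ ≤ M := hM
    have hest := hKconvex.norm_image_sub_le_of_norm_fderiv_le hdiff hbd
      (hmem0 x hx) (hmem x hx)
    have hnorm : ‖((x, y, h x) : ℝ × ℝ × ℝ) - (x, y, 0)‖ = h x := by
      have : ((x, y, h x) : ℝ × ℝ × ℝ) - (x, y, 0) = (0, 0, h x) := by
        simp [Prod.ext_iff]
      rw [this]
      simp [Prod.norm_def, abs_of_nonneg, hnn x]
    have hcomp : |(v (x, y, h x)).2.2| ≤ ‖v (x, y, h x) - v (x, y, 0)‖ := by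
      have h1 : |(v (x, y, h x) - v (x, y, 0)).2.2| ≤ ‖v (x, y, h x) - v (x, y, 0)‖ :=
        (norm_snd_le _).trans' (norm_snd_le _) |>.trans' le_rfl
          |>.trans' (by simp [Real.norm_eq_abs])
      simpa [htan₁ x y] using h1
    calc |(v (x, y, h x)).2.2| ≤ ‖v (x, y, h x) - v (x, y, 0)‖ := hcomp
      _ ≤ M * ‖((x, y, h x) : ℝ × ℝ × ℝ) - (x, y, 0)‖ := hest
      _ = M * h x := by rw [hnorm]
  -- continuity : v₁ near branch locus is close to c
  have hgcont : Continuous fun x : ℝ => (v (x, y, h x)).1 :=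
    (hv.continuous.comp (continuous_id.prodMk
      (continuous_const.prodMk hh.continuous))).fst
  have hg0 : (fun x : ℝ => (v (x, y, h x)).1) 0 = c := by simp [h0, hcdef]
  have hcont0 : ContinuousAt (fun x : ℝ => (v (x, y, h x)).1) 0 := hgcont.continuousAt
  obtain ⟨δ, hδpos, hδ⟩ := Metric.continuousAt_iff.1 hcont0 (|c| / 2) (by positivity)
  -- the lower bound |v₁| ≥ |c|/2 for |x| < δ
  have hlow : ∀ x : ℝ, |x| < δ → |c| / 2 ≤ |(v (x, y, h x)).1| := by
    intro x hx
    have h1 := hδ (by simpa [Real.dist_eq] using hx)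
    rw [h0, Real.dist_eq, ← hcdef] at h1
    have h2 := abs_sub_abs_le_abs_sub c ((v (x, y, h x)).1)
    rw [abs_sub_comm] at h2
    linarith
  set C : ℝ := 2 * M / |c| with hCdef
  have hCnn : 0 ≤ C := by positivity
  set a : ℝ := min δ 1 / 2 with hadef
  have hapos : 0 < a := by positivity
  have ha1 : a ≤ 1 / 2 := by
    have : min δ 1 ≤ 1 := min_le_right _ _
    simp [hadef]; linarith
  have haδ : a < δ := by
    have h1 : min δ 1 ≤ δ := min_le_left _ _
    have h2 : 0 < min δ 1 := lt_min hδpos one_pos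
    simp only [hadef]; linarith
  -- derivative bound on Ioo (-a) 0
  have hderiv_bound : ∀ x ∈ Set.Ioo (-a) 0, -(C * h x) ≤ deriv h x := by
    intro x hx
    have hxIcc : x ∈ Set.Icc (-1:ℝ) 0 := ⟨by cases hx; linarith, hx.2.le⟩
    have hxabs : |x| < δ := by
      rw [abs_lt]; exact ⟨by linarith [hx.1], by linarith [hx.2, hδpos]⟩
    have h1 := key x hxIcc
    rw [htan₂ x y, abs_mul] at h1
    have h2 := hlow x hxabs
    have h3 : |deriv h x| * (|c| / 2) ≤ M * h x := by
      calc |deriv h x| * (|c| / 2) ≤ |deriv h x| * |(v (x, y, h x)).1| := by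
            exact mul_le_mul_of_nonneg_left h2 (abs_nonneg _)
        _ ≤ M * h x := h1
    have h4 : |deriv h x| ≤ C * h x := by
      rw [hCdef]
      rw [div_mul_eq_mul_div, le_div_iff₀ hcpos]
      calc |deriv h x| * |c| = |deriv h x| * (|c| / 2) * 2 := by ring
        _ ≤ M * h x * 2 := by linarith
        _ = 2 * M * h x := by ring
    have := neg_abs_le (deriv h x)
    linarith [(abs_le.1 h4).1]
  -- φ = h * exp (C x) is monotone on [-a, 0]
  set φ : ℝ → ℝ := fun x => h x * Real.exp (C * x) with hφdef
  have hφderiv : ∀ x : ℝ, HasDerivAt φ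
      (deriv h x * Real.exp (C * x) + h x * (Real.exp (C * x) * C)) x := by
    intro x
    have h1 : HasDerivAt (fun x : ℝ => C * x) C x := by
      simpa using (hasDerivAt_id x).const_mul C
    exact ((hh.differentiable (by simp) x).hasDerivAt).mul h1.exp
  have hmono : MonotoneOn φ (Set.Icc (-a) 0) := by
    apply monotoneOn_of_deriv_nonneg (convex_Icc _ _)
    · exact (hh.continuous.mul (Real.continuous_exp.comp
        (continuous_const.mul continuous_id))).continuousOn
    · intro x _
      exact (hφderiv x).differentiableAt.differentiableWithinAt
    · intro x hx
      rw [interior_Icc] at hx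
      rw [(hφderiv x).deriv]
      have hb := hderiv_bound x hx
      have hexp : 0 < Real.exp (C * x) := Real.exp_pos _
      nlinarith [hexp, hb]
  have hφa : 0 < φ (-a) := by
    have : 0 < h (-a) := hpos _ (by linarith)
    positivity
  have hφ0 : φ 0 = 0 := by simp [hφdef, h0]
  have hle : φ (-a) ≤ φ 0 :=
    hmono ⟨le_rfl, by linarith⟩ ⟨by linarith, le_rfl⟩ (by linarith)
  linarith
end

section
/- Let A⁰, A¹ : ℝ³ → ℝ³ be C¹ vector fields, identified with the 1-forms A₁dx + A₂dy + A₃dz, whose first two components agree at every point of the plane {z = 0}: A⁰₁(x,y,0) = A¹₁(x,y,0) and A⁰₂(x,y,0) = A¹₂(x,y,0) for all x, y ∈ ℝ. Let p ∈ ℝ³ be a point with third coordinate 0 and suppose that ⟨Aʲ(p), curl Aʲ(p)⟩ > 0 for j = 0, 1. Then for every s ∈ [0,1] the interpolated field Aˢ = (1−s)A⁰ + sA¹ satisfies ⟨Aˢ(p), curl Aˢ(p)⟩ > 0; indeed the function s ↦ ⟨Aˢ(p), curl Aˢ(p)⟩ is affine in s. Hence a convex combination of two positive contact forms which induce the same characteristic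 foliation on the plane {z = 0} (i.e. have equal horizontal parts there) is again a positive contact form at every point of that plane. -/
/-- Partial derivative in the first coordinate of a function on `ℝ³`. -/
noncomputable def pd1 (f : ℝ × ℝ × ℝ → ℝ) (q : ℝ × ℝ × ℝ) : ℝ :=
  fderiv ℝ f q (1, 0, 0)

/-- Partial derivative in the second coordinate of a function on `ℝ³`. -/
noncomputable def pd2 (f : ℝ × ℝ × ℝ → ℝ) (q : ℝ × ℝ × ℝ) : ℝ :=
  fderiv ℝ f q (0, 1, 0)

/-- Partial derivative in the third coordinate of a function on `ℝ³`. -/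
noncomputable def pd3 (f : ℝ × ℝ × ℝ → ℝ) (q : ℝ × ℝ × ℝ) : ℝ :=
  fderiv ℝ f q (0, 0, 1)

/-- The curl of a vector field on `ℝ³`. -/
noncomputable def curl3 (A : ℝ × ℝ × ℝ → ℝ × ℝ × ℝ) (q : ℝ × ℝ × ℝ) : ℝ × ℝ × ℝ :=
  (pd2 (fun r => (A r).2.2) q - pd3 (fun r => (A r).2.1) q,
   pd3 (fun r => (A r).1) q - pd1 (fun r => (A r).2.2) q,
   pd1 (fun r => (A r).2.1) q - pd2 (fun r => (A r).1) q)

/-- The Euclidean inner product on `ℝ³`. -/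
def dot3 (u v : ℝ × ℝ × ℝ) : ℝ :=
  u.1 * v.1 + u.2.1 * v.2.1 + u.2.2 * v.2.2

/-! Expanding bilinearly, `⟨Aˢ, curl Aˢ⟩(p)` is a quadratic polynomial in `s` whose mixed term
`⟨A⁰, curl A¹⟩ + ⟨A¹, curl A⁰⟩` equals `⟨A⁰, curl A⁰⟩ + ⟨A¹, curl A¹⟩`: the horizontal parts of `A⁰`
and `A¹` agree at `p`, and since they agree along the whole plane so do their horizontal
derivatives, i.e. the vertical components of the two curls. The quadratic therefore collapses to
`(1 - s)⟨A⁰, curl A⁰⟩ + s⟨A¹, curl A¹⟩`, which is positive on `[0, 1]` by convexity. -/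

theorem fderiv_apply_eq_of_eq_on_line {𝕜 E F : Type*} [NontriviallyNormedField 𝕜]
    [NormedAddCommGroup E] [NormedSpace 𝕜 E] [NormedAddCommGroup F] [NormedSpace 𝕜 F]
    {f g : E → F} {x v : E} (hf : DifferentiableAt 𝕜 f x) (hg : DifferentiableAt 𝕜 g x)
    (h : ∀ t : 𝕜, f (x + t • v) = g (x + t • v)) :
    fderiv 𝕜 f x v = fderiv 𝕜 g x v := by
  rw [← hf.lineDeriv_eq_fderiv, ← hg.lineDeriv_eq_fderiv, lineDeriv, lineDeriv]
  simp only [h]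

section Plane

variable {f g : ℝ × ℝ × ℝ → ℝ} {p : ℝ × ℝ × ℝ}

theorem pd1_eq_of_eq_on_plane (hf : DifferentiableAt ℝ f p) (hg : DifferentiableAt ℝ g p)
    (hp : p.2.2 = 0) (h : ∀ x y : ℝ, f (x, y, 0) = g (x, y, 0)) : pd1 f p = pd1 g p := by
  obtain ⟨x, y, rfl⟩ : ∃ x y, p = (x, y, 0) := ⟨p.1, p.2.1, by ext <;> simp [hp]⟩
  exact fderiv_apply_eq_of_eq_on_line hf hg fun t => by simpa using h (x + t) y

theorem pd2_eq_of_eq_on_plane (hf : DifferentiableAt ℝ f p) (hg : DifferentiableAt ℝ g p)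
    (hp : p.2.2 = 0) (h : ∀ x y : ℝ, f (x, y, 0) = g (x, y, 0)) : pd2 f p = pd2 g p := by
  obtain ⟨x, y, rfl⟩ : ∃ x y, p = (x, y, 0) := ⟨p.1, p.2.1, by ext <;> simp [hp]⟩
  exact fderiv_apply_eq_of_eq_on_line hf hg fun t => by simpa using h x (y + t)

end Plane

section Curl

variable {A B : ℝ × ℝ × ℝ → ℝ × ℝ × ℝ} {p : ℝ × ℝ × ℝ}

theorem curl3_smul_add_smul (hA : DifferentiableAt ℝ A p) (hB : DifferentiableAt ℝ B p)
    (a b : ℝ) : curl3 (fun q => a • A q + b • B q) p = a • curl3 A p + b • curl3 B p := by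
  simp (disch := fun_prop) only [curl3, pd1, pd2, pd3, Prod.fst_add, Prod.snd_add, Prod.smul_fst,
    Prod.smul_snd, smul_eq_mul, fderiv_fun_add, fderiv_const_mul]
  simp only [add_apply, smul_apply, smul_eq_mul, Prod.mk_add_mk, Prod.smul_mk, Prod.mk.injEq]
  refine ⟨by ring, by ring, by ring⟩

theorem curl3_snd_snd_eq_of_horizontal_eq (hA : DifferentiableAt ℝ A p)
    (hB : DifferentiableAt ℝ B p) (hp : p.2.2 = 0)
    (h₁ : ∀ x y : ℝ, (A (x, y, 0)).1 = (B (x, y, 0)).1)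
    (h₂ : ∀ x y : ℝ, (A (x, y, 0)).2.1 = (B (x, y, 0)).2.1) :
    (curl3 A p).2.2 = (curl3 B p).2.2 := by
  simp only [curl3]
  rw [pd1_eq_of_eq_on_plane hA.snd.fst hB.snd.fst hp h₂, pd2_eq_of_eq_on_plane hA.fst hB.fst hp h₁]

end Curl

theorem dot3_smul_add_smul_of_eq {u v w x : ℝ × ℝ × ℝ} (h₁ : u.1 = v.1) (h₂ : u.2.1 = v.2.1)
    (h₃ : w.2.2 = x.2.2) {a b : ℝ} (hab : a + b = 1) :
    dot3 (a • u + b • v) (a • w + b • x) = a * dot3 u w + b * dot3 v x := by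
  obtain rfl : b = 1 - a := by linarith
  simp only [dot3, Prod.fst_add, Prod.snd_add, Prod.smul_fst, Prod.smul_snd, smul_eq_mul, h₁, h₂, h₃]
  ring

/-- Convex combinations of two positive contact forms inducing the same characteristic
foliation on the plane `{z = 0}` (i.e. whose horizontal parts agree there) are again
positive contact forms at every point of that plane: `s ↦ ⟨Aˢ, curl Aˢ⟩(p)` is affine
in `s` and positive for `s ∈ [0,1]`. -/
theorem convex_combination_contact_on_plane
    (A₀ A₁ : ℝ × ℝ × ℝ → ℝ × ℝ × ℝ)
    (hA₀ : ContDiff ℝ 1 A₀) (hA₁ : ContDiff ℝ 1 A₁)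
    (hhor₁ : ∀ x y : ℝ, (A₀ (x, y, 0)).1 = (A₁ (x, y, 0)).1)
    (hhor₂ : ∀ x y : ℝ, (A₀ (x, y, 0)).2.1 = (A₁ (x, y, 0)).2.1)
    (p : ℝ × ℝ × ℝ) (hp : p.2.2 = 0)
    (h₀ : 0 < dot3 (A₀ p) (curl3 A₀ p))
    (h₁ : 0 < dot3 (A₁ p) (curl3 A₁ p)) :
    (∀ s ∈ Set.Icc (0 : ℝ) 1,
      0 < dot3 ((1 - s) • A₀ p + s • A₁ p)
        (curl3 (fun q => (1 - s) • A₀ q + s • A₁ q) p)) ∧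
    ∃ c d : ℝ, ∀ s : ℝ,
      dot3 ((1 - s) • A₀ p + s • A₁ p)
        (curl3 (fun q => (1 - s) • A₀ q + s • A₁ q) p) = c + d * s := by
  have hd₀ : DifferentiableAt ℝ A₀ p := hA₀.differentiable one_ne_zero p
  have hd₁ : DifferentiableAt ℝ A₁ p := hA₁.differentiable one_ne_zero p
  have hp' : p = (p.1, p.2.1, 0) := by ext <;> simp [hp]
  set P₀ := dot3 (A₀ p) (curl3 A₀ p)
  set P₁ := dot3 (A₁ p) (curl3 A₁ p)
  have affine : ∀ s : ℝ, dot3 ((1 - s) • A₀ p + s • A₁ p)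
      (curl3 (fun q => (1 - s) • A₀ q + s • A₁ q) p) = (1 - s) * P₀ + s * P₁ := fun s => by
    rw [curl3_smul_add_smul hd₀ hd₁]
    refine dot3_smul_add_smul_of_eq ?_ ?_ (curl3_snd_snd_eq_of_horizontal_eq hd₀ hd₁ hp hhor₁ hhor₂)
      (sub_add_cancel 1 s) <;> rw [hp']
    exacts [hhor₁ _ _, hhor₂ _ _]
  refine ⟨fun s hs => ?_, P₀, P₁ - P₀, fun s => (affine s).trans (by ring)⟩
  rw [affine]
  exact convex_Ioi (0 : ℝ) h₀ h₁ (sub_nonneg.2 hs.2) hs.1 (sub_add_cancel 1 s)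
end

section
/- Let a₁, a₂, e₁, e₂ : ℝ² → ℝ be C^∞ functions; set g = ∂ₓa₂ − ∂_y a₁ and ρ = a₁e₂ − a₂e₁. Let K ⊆ ℝ² be a compact set with g(p) + ρ(p) > 0 for every p ∈ K. Define B : ℝ³ → ℝ³ by B(x,y,t) = (a₁(x,y) − t·e₁(x,y), a₂(x,y) − t·e₂(x,y), 1), the coefficient field of the 1-form β = α − t·η + dt. Then there exists ε > 0 such that ⟨B(q), curl B(q)⟩ > 0 for every point q = (x,y,t) with (x,y) ∈ K and |t| ≤ ε; in fact ⟨B, curl B⟩(x,y,t) = ρ(x,y) + g(x,y) − t·(∂ₓe₂ − ∂_y e₁)(x,y). Hence β is a positive contact form on K × [−ε, ε] inducing the 1-form α = a₁dx + a₂dy on the surface t = 0. -/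
/-- Partial derivative in the `x` direction of a function on `ℝ²`. -/
noncomputable def px (f : ℝ × ℝ → ℝ) (p : ℝ × ℝ) : ℝ := fderiv ℝ f p (1, 0)

/-- Partial derivative in the `y` direction of a function on `ℝ²`. -/
noncomputable def py (f : ℝ × ℝ → ℝ) (p : ℝ × ℝ) : ℝ := fderiv ℝ f p (0, 1)

/-- Projection `(x, y, t) ↦ (x, y)` as a continuous linear map. -/
noncomputable def projXY : (ℝ × ℝ × ℝ) →L[ℝ] (ℝ × ℝ) :=
  (ContinuousLinearMap.fst ℝ ℝ (ℝ × ℝ)).prod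
    ((ContinuousLinearMap.fst ℝ ℝ ℝ).comp (ContinuousLinearMap.snd ℝ ℝ (ℝ × ℝ)))

/-- Projection `(x, y, t) ↦ t` as a continuous linear map. -/
noncomputable def projT : (ℝ × ℝ × ℝ) →L[ℝ] ℝ :=
  (ContinuousLinearMap.snd ℝ ℝ ℝ).comp (ContinuousLinearMap.snd ℝ ℝ (ℝ × ℝ))

lemma deriv_aux (f e : ℝ × ℝ → ℝ) (hf : ContDiff ℝ (⊤ : ℕ∞) f) (he : ContDiff ℝ (⊤ : ℕ∞) e)
    (x y t : ℝ) (v : ℝ × ℝ × ℝ) :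
    fderiv ℝ (fun q : ℝ × ℝ × ℝ => f (q.1, q.2.1) - q.2.2 * e (q.1, q.2.1)) (x, y, t) v
      = fderiv ℝ f (x, y) (v.1, v.2.1)
        - (v.2.2 * e (x, y) + t * fderiv ℝ e (x, y) (v.1, v.2.1)) := by
  have hπ : HasFDerivAt (fun q : ℝ × ℝ × ℝ => ((q.1, q.2.1) : ℝ × ℝ)) projXY (x, y, t) :=
    projXY.hasFDerivAt
  have hτ : HasFDerivAt (fun q : ℝ × ℝ × ℝ => q.2.2) projT (x, y, t) := projT.hasFDerivAt
  have hf' : HasFDerivAt (fun q : ℝ × ℝ × ℝ => f (q.1, q.2.1))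
      ((fderiv ℝ f (x, y)).comp projXY) (x, y, t) :=
    ((hf.differentiable (by simp) (x, y)).hasFDerivAt).comp ((x, y, t) : ℝ × ℝ × ℝ) hπ
  have he' : HasFDerivAt (fun q : ℝ × ℝ × ℝ => e (q.1, q.2.1))
      ((fderiv ℝ e (x, y)).comp projXY) (x, y, t) :=
    ((he.differentiable (by simp) (x, y)).hasFDerivAt).comp ((x, y, t) : ℝ × ℝ × ℝ) hπ
  have hmul := hτ.fun_mul he'
  have htot := hf'.fun_sub hmul
  rw [htot.fderiv]
  simp [projXY, projT, ContinuousLinearMap.comp_apply]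
  ring

/-- Continuity of a partial derivative of a smooth function. -/
lemma cont_pd (f : ℝ × ℝ → ℝ) (hf : ContDiff ℝ (⊤ : ℕ∞) f) (v : ℝ × ℝ) :
    Continuous (fun p => fderiv ℝ f p v) :=
  (hf.continuous_fderiv (by simp)).clm_apply continuous_const

/-- Contactization `β = α - t·η + dt` for positive divergence: if `g + ρ > 0` on the
compact set `K`, then the coefficient field `B (x,y,t) = (a₁ - t·e₁, a₂ - t·e₂, 1)`
satisfies `⟨B, curl B⟩ > 0` on `K × [-ε, ε]` for some `ε > 0`; in fact
`⟨B, curl B⟩ (x,y,t) = ρ (x,y) + g (x,y) - t·(∂ₓe₂ - ∂_y e₁) (x,y)`. -/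
theorem contactization_positive_divergence
    (a₁ a₂ e₁ e₂ : ℝ × ℝ → ℝ)
    (ha₁ : ContDiff ℝ (⊤ : ℕ∞) a₁) (ha₂ : ContDiff ℝ (⊤ : ℕ∞) a₂)
    (he₁ : ContDiff ℝ (⊤ : ℕ∞) e₁) (he₂ : ContDiff ℝ (⊤ : ℕ∞) e₂)
    (g ρ : ℝ × ℝ → ℝ)
    (hg : ∀ p : ℝ × ℝ, g p = px a₂ p - py a₁ p)
    (hρ : ∀ p : ℝ × ℝ, ρ p = a₁ p * e₂ p - a₂ p * e₁ p)
    (K : Set (ℝ × ℝ)) (hK : IsCompact K)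
    (hpos : ∀ p ∈ K, 0 < g p + ρ p)
    (B : ℝ × ℝ × ℝ → ℝ × ℝ × ℝ)
    (hB : ∀ x y t : ℝ,
      B (x, y, t) = (a₁ (x, y) - t * e₁ (x, y), a₂ (x, y) - t * e₂ (x, y), 1)) :
    (∀ x y t : ℝ, dot3 (B (x, y, t)) (curl3 B (x, y, t)) =
      ρ (x, y) + g (x, y) - t * (px e₂ (x, y) - py e₁ (x, y))) ∧
    ∃ ε > (0 : ℝ), ∀ x y t : ℝ, (x, y) ∈ K → |t| ≤ ε →
      0 < dot3 (B (x, y, t)) (curl3 B (x, y, t)) := by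
  have hB1 : (fun r => (B r).1)
      = fun q : ℝ × ℝ × ℝ => a₁ (q.1, q.2.1) - q.2.2 * e₁ (q.1, q.2.1) := by
    funext r; exact congrArg Prod.fst (hB r.1 r.2.1 r.2.2)
  have hB2 : (fun r => (B r).2.1)
      = fun q : ℝ × ℝ × ℝ => a₂ (q.1, q.2.1) - q.2.2 * e₂ (q.1, q.2.1) := by
    funext r; exact congrArg (fun u => u.2.1) (hB r.1 r.2.1 r.2.2)
  have hB3 : (fun r => (B r).2.2) = fun _ : ℝ × ℝ × ℝ => (1 : ℝ) := by
    funext r; exact congrArg (fun u => u.2.2) (hB r.1 r.2.1 r.2.2)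
  have key : ∀ x y t : ℝ, dot3 (B (x, y, t)) (curl3 B (x, y, t)) =
      ρ (x, y) + g (x, y) - t * (px e₂ (x, y) - py e₁ (x, y)) := by
    intro x y t
    have h3 : ∀ v : ℝ × ℝ × ℝ, fderiv ℝ (fun r => (B r).2.2) (x, y, t) v = 0 := by
      intro v; rw [hB3, fderiv_fun_const]; simp
    simp only [dot3, curl3, pd1, pd2, pd3, hB1, hB2]
    rw [h3 (0, 1, 0), h3 (1, 0, 0),
      deriv_aux a₁ e₁ ha₁ he₁ x y t (0, 0, 1),
      deriv_aux a₁ e₁ ha₁ he₁ x y t (0, 1, 0),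
      deriv_aux a₂ e₂ ha₂ he₂ x y t (0, 0, 1),
      deriv_aux a₂ e₂ ha₂ he₂ x y t (1, 0, 0)]
    have hd0 : ∀ f : ℝ × ℝ → ℝ, ContDiff ℝ (⊤ : ℕ∞) f →
        fderiv ℝ f (x, y) ((0 : ℝ), (0 : ℝ)) = 0 := by
      intro f hf
      have : ((0 : ℝ), (0 : ℝ)) = (0 : ℝ × ℝ) := rfl
      rw [this, map_zero]
    rw [hd0 a₁ ha₁, hd0 e₁ he₁, hd0 a₂ ha₂, hd0 e₂ he₂]
    have e1 := congrArg Prod.fst (hB x y t)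
    have e2 := congrArg (fun u : ℝ × ℝ × ℝ => u.2.1) (hB x y t)
    have e3 := congrArg (fun u : ℝ × ℝ × ℝ => u.2.2) (hB x y t)
    simp only at e1 e2 e3
    rw [e1, e2, e3, hg (x, y), hρ (x, y)]
    simp only [px, py]
    ring
  refine ⟨key, ?_⟩
  rcases K.eq_empty_or_nonempty with hKe | hne
  · exact ⟨1, one_pos, fun x y t hxy _ => absurd hxy (by simp [hKe])⟩
  · have hFcont : Continuous fun p => g p + ρ p := by
      have hgc : Continuous g := by
        have : g = fun p => fderiv ℝ a₂ p (1, 0) - fderiv ℝ a₁ p (0, 1) := by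
          funext p; rw [hg p]; rfl
        rw [this]
        exact (cont_pd a₂ ha₂ _).sub (cont_pd a₁ ha₁ _)
      have hρc : Continuous ρ := by
        have : ρ = fun p => a₁ p * e₂ p - a₂ p * e₁ p := by funext p; exact hρ p
        rw [this]
        exact ((ha₁.continuous.mul he₂.continuous).sub
          (ha₂.continuous.mul he₁.continuous))
      exact hgc.add hρc
    have hhcont : Continuous fun p : ℝ × ℝ => px e₂ p - py e₁ p := by
      have : (fun p : ℝ × ℝ => px e₂ p - py e₁ p)
          = fun p => fderiv ℝ e₂ p (1, 0) - fderiv ℝ e₁ p (0, 1) := rfl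
      rw [this]
      exact (cont_pd e₂ he₂ _).sub (cont_pd e₁ he₁ _)
    obtain ⟨p₀, hp₀K, hp₀min⟩ := hK.exists_isMinOn hne hFcont.continuousOn
    set m := g p₀ + ρ p₀ with hm_def
    have hm : 0 < m := hpos p₀ hp₀K
    obtain ⟨C, hC⟩ := hK.exists_bound_of_continuousOn hhcont.continuousOn
    have hC0 : 0 ≤ C := le_trans (norm_nonneg _) (hC p₀ hp₀K)
    refine ⟨m / (2 * (C + 1)), by positivity, fun x y t hxy ht => ?_⟩
    rw [key x y t]
    have hmle : m ≤ g (x, y) + ρ (x, y) := hp₀min hxy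
    have habs : |t * (px e₂ (x, y) - py e₁ (x, y))| ≤ m / 2 := by
      rw [abs_mul]
      have h1 : |px e₂ (x, y) - py e₁ (x, y)| ≤ C := hC (x, y) hxy
      calc |t| * |px e₂ (x, y) - py e₁ (x, y)|
          ≤ (m / (2 * (C + 1))) * (C + 1) := by
            apply mul_le_mul ht (by linarith) (abs_nonneg _) (by positivity)
        _ = m / 2 := by field_simp
    have := le_abs_self (t * (px e₂ (x, y) - py e₁ (x, y)))
    linarith
end

section
/- Let a₁, a₂, e₁, e₂ : ℝ² → ℝ be C^∞ functions; set g = ∂ₓa₂ − ∂_y a₁ and ρ = a₁e₂ − a₂e₁. Let K ⊆ ℝ² be a compact set with ρ(p) + g(p)² > 0 for every p ∈ K. Define B : ℝ³ → ℝ³ by B(x,y,t) = (a₁ + t·(∂ₓg − e₁), a₂ + t·(∂_y g − e₂), g) (all functions evaluated at (x,y)), the coefficient field of the 1-form β = α + t·(dg − η) + g·dt. Then there exists ε > 0 such that ⟨B(q), curl B(q)⟩ > 0 for every point q = (x,y,t) with (x,y) ∈ K and |t| ≤ ε; in fact ⟨B, curl B⟩(x,y,t) = ρ + g² + t·(e₂·∂ₓg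 − e₁·∂_y g + g·(∂_y e₁ − ∂ₓe₂)) evaluated at (x,y). Hence β is a positive contact form on K × [−ε, ε] inducing the 1-form α = a₁dx + a₂dy on the surface t = 0. -/
/-! ### Auxiliary lemmas -/

/-- Projection `ℝ³ → ℝ²` onto the first two coordinates, as a continuous linear map. -/
noncomputable def Pxy : (ℝ × ℝ × ℝ) →L[ℝ] (ℝ × ℝ) :=
  (ContinuousLinearMap.fst ℝ ℝ (ℝ × ℝ)).prod
    ((ContinuousLinearMap.fst ℝ ℝ ℝ).comp (ContinuousLinearMap.snd ℝ ℝ (ℝ × ℝ)))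

/-- Projection `ℝ³ → ℝ` onto the third coordinate, as a continuous linear map. -/
noncomputable def Tz : (ℝ × ℝ × ℝ) →L[ℝ] ℝ :=
  (ContinuousLinearMap.snd ℝ ℝ ℝ).comp (ContinuousLinearMap.snd ℝ ℝ (ℝ × ℝ))

@[simp] lemma Pxy_apply (q : ℝ × ℝ × ℝ) : Pxy q = (q.1, q.2.1) := rfl
@[simp] lemma Tz_apply (q : ℝ × ℝ × ℝ) : Tz q = q.2.2 := rfl

lemma smooth_px {f : ℝ × ℝ → ℝ} (hf : ContDiff ℝ (⊤ : ℕ∞) f) : ContDiff ℝ (⊤ : ℕ∞) (px f) :=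
  (hf.fderiv_right (by simp)).clm_apply contDiff_const

lemma smooth_py {f : ℝ × ℝ → ℝ} (hf : ContDiff ℝ (⊤ : ℕ∞) f) : ContDiff ℝ (⊤ : ℕ∞) (py f) :=
  (hf.fderiv_right (by simp)).clm_apply contDiff_const

lemma px_sub {f₁ f₂ : ℝ × ℝ → ℝ} (h₁ : Differentiable ℝ f₁) (h₂ : Differentiable ℝ f₂)
    (p : ℝ × ℝ) : px (fun q => f₁ q - f₂ q) p = px f₁ p - px f₂ p := by
  simp [px, fderiv_fun_sub (h₁ p) (h₂ p)]

lemma py_sub {f₁ f₂ : ℝ × ℝ → ℝ} (h₁ : Differentiable ℝ f₁) (h₂ : Differentiable ℝ f₂)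
    (p : ℝ × ℝ) : py (fun q => f₁ q - f₂ q) p = py f₁ p - py f₂ p := by
  simp [py, fderiv_fun_sub (h₁ p) (h₂ p)]

/-- Symmetry of second partial derivatives for a smooth function (Clairaut/Schwarz). -/
lemma clairaut {g : ℝ × ℝ → ℝ} (hg : ContDiff ℝ (⊤ : ℕ∞) g) (p : ℝ × ℝ) :
    px (py g) p = py (px g) p := by
  have hD : ContDiff ℝ (⊤ : ℕ∞) (fderiv ℝ g) := hg.fderiv_right (by simp)
  have hDd : Differentiable ℝ (fderiv ℝ g) := hD.differentiable (by simp)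
  have hDp : HasFDerivAt (fderiv ℝ g) (fderiv ℝ (fderiv ℝ g) p) p := (hDd p).hasFDerivAt
  have hsymm := second_derivative_symmetric
    (fun y => ((hg.differentiable (by simp)) y).hasFDerivAt) hDp
  have h1 : HasFDerivAt (fun x => fderiv ℝ g x (0, 1))
      ((fderiv ℝ g p).comp (0 : (ℝ × ℝ) →L[ℝ] (ℝ × ℝ)) +
        (fderiv ℝ (fderiv ℝ g) p).flip ((0:ℝ), (1:ℝ))) p :=
    hDp.clm_apply (hasFDerivAt_const _ _)
  have h2 : HasFDerivAt (fun x => fderiv ℝ g x (1, 0))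
      ((fderiv ℝ g p).comp (0 : (ℝ × ℝ) →L[ℝ] (ℝ × ℝ)) +
        (fderiv ℝ (fderiv ℝ g) p).flip ((1:ℝ), (0:ℝ))) p :=
    hDp.clm_apply (hasFDerivAt_const _ _)
  have hpy : py g = fun x => fderiv ℝ g x (0, 1) := rfl
  have hpx : px g = fun x => fderiv ℝ g x (1, 0) := rfl
  have e1 : px (py g) p = fderiv ℝ (fderiv ℝ g) p (1, 0) (0, 1) := by
    rw [px, hpy, h1.fderiv]; simp
  have e2 : py (px g) p = fderiv ℝ (fderiv ℝ g) p (0, 1) (1, 0) := by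
    rw [py, hpx, h2.fderiv]; simp
  rw [e1, e2, hsymm]

/-- Total derivative of `(x,y,t) ↦ f(x,y) + t·u(x,y)`. -/
lemma hasFDerivAt_G (f u : ℝ × ℝ → ℝ) (hf : Differentiable ℝ f) (hu : Differentiable ℝ u)
    (q : ℝ × ℝ × ℝ) :
    HasFDerivAt (fun r : ℝ × ℝ × ℝ => f (r.1, r.2.1) + r.2.2 * u (r.1, r.2.1))
      (((fderiv ℝ f (q.1, q.2.1)).comp Pxy) +
        (q.2.2 • ((fderiv ℝ u (q.1, q.2.1)).comp Pxy) + u (q.1, q.2.1) • Tz)) q := by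
  have hfP : HasFDerivAt (fun r : ℝ × ℝ × ℝ => f (r.1, r.2.1))
      ((fderiv ℝ f (q.1, q.2.1)).comp Pxy) q := by
    have := ((hf (q.1, q.2.1)).hasFDerivAt).comp q Pxy.hasFDerivAt
    exact this
  have huP : HasFDerivAt (fun r : ℝ × ℝ × ℝ => u (r.1, r.2.1))
      ((fderiv ℝ u (q.1, q.2.1)).comp Pxy) q := by
    have := ((hu (q.1, q.2.1)).hasFDerivAt).comp q Pxy.hasFDerivAt
    exact this
  have hT : HasFDerivAt (fun r : ℝ × ℝ × ℝ => r.2.2) Tz q := Tz.hasFDerivAt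
  have := hfP.add (hT.mul huP)
  exact this

/-- The three partial derivatives of `(x,y,t) ↦ f(x,y) + t·u(x,y)`. -/
lemma pd_G (f u : ℝ × ℝ → ℝ) (hf : Differentiable ℝ f) (hu : Differentiable ℝ u)
    (x y t : ℝ) :
    pd1 (fun r : ℝ × ℝ × ℝ => f (r.1, r.2.1) + r.2.2 * u (r.1, r.2.1)) (x, y, t)
        = px f (x, y) + t * px u (x, y) ∧
    pd2 (fun r : ℝ × ℝ × ℝ => f (r.1, r.2.1) + r.2.2 * u (r.1, r.2.1)) (x, y, t)
        = py f (x, y) + t * py u (x, y) ∧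
    pd3 (fun r : ℝ × ℝ × ℝ => f (r.1, r.2.1) + r.2.2 * u (r.1, r.2.1)) (x, y, t)
        = u (x, y) := by
  have h := (hasFDerivAt_G f u hf hu (x, y, t)).fderiv
  refine ⟨?_, ?_, ?_⟩ <;>
    simp [pd1, pd2, pd3, h, px, py, Pxy, Tz, ContinuousLinearMap.comp_apply, Prod.mk_zero_zero]

@[simp] lemma px_zero (p : ℝ × ℝ) : px (fun _ : ℝ × ℝ => (0:ℝ)) p = 0 := by
  simp [px]

@[simp] lemma py_zero (p : ℝ × ℝ) : py (fun _ : ℝ × ℝ => (0:ℝ)) p = 0 := by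
  simp [py]

/-- Giroux's contactization `β = α + t·(dg - η) + g·dt` for non-zero divergence:
if `ρ + g² > 0` on the compact set `K`, then the coefficient field
`B (x,y,t) = (a₁ + t·(∂ₓg - e₁), a₂ + t·(∂_y g - e₂), g)` satisfies
`⟨B, curl B⟩ > 0` on `K × [-ε, ε]` for some `ε > 0`; in fact
`⟨B, curl B⟩ (x,y,t) = ρ + g² + t·(e₂·∂ₓg - e₁·∂_y g + g·(∂_y e₁ - ∂ₓe₂))`
evaluated at `(x,y)`. -/
theorem contactization_nonzero_divergence
    (a₁ a₂ e₁ e₂ : ℝ × ℝ → ℝ)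
    (ha₁ : ContDiff ℝ (⊤ : ℕ∞) a₁) (ha₂ : ContDiff ℝ (⊤ : ℕ∞) a₂)
    (he₁ : ContDiff ℝ (⊤ : ℕ∞) e₁) (he₂ : ContDiff ℝ (⊤ : ℕ∞) e₂)
    (g ρ : ℝ × ℝ → ℝ)
    (hg : ∀ p : ℝ × ℝ, g p = px a₂ p - py a₁ p)
    (hρ : ∀ p : ℝ × ℝ, ρ p = a₁ p * e₂ p - a₂ p * e₁ p)
    (K : Set (ℝ × ℝ)) (hK : IsCompact K)
    (hpos : ∀ p ∈ K, 0 < ρ p + (g p) ^ 2)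
    (B : ℝ × ℝ × ℝ → ℝ × ℝ × ℝ)
    (hB : ∀ x y t : ℝ,
      B (x, y, t) = (a₁ (x, y) + t * (px g (x, y) - e₁ (x, y)),
                     a₂ (x, y) + t * (py g (x, y) - e₂ (x, y)),
                     g (x, y))) :
    (∀ x y t : ℝ, dot3 (B (x, y, t)) (curl3 B (x, y, t)) =
      ρ (x, y) + (g (x, y)) ^ 2 +
        t * (e₂ (x, y) * px g (x, y) - e₁ (x, y) * py g (x, y) +
          g (x, y) * (py e₁ (x, y) - px e₂ (x, y)))) ∧
    ∃ ε > (0 : ℝ), ∀ x y t : ℝ, (x, y) ∈ K → |t| ≤ ε →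
      0 < dot3 (B (x, y, t)) (curl3 B (x, y, t)) := by
  -- smoothness of `g` and the auxiliary coefficient functions
  have hgfun : g = fun p => px a₂ p - py a₁ p := funext hg
  have hgsm : ContDiff ℝ (⊤ : ℕ∞) g := by
    rw [hgfun]; exact (smooth_px ha₂).sub (smooth_py ha₁)
  set u : ℝ × ℝ → ℝ := fun p => px g p - e₁ p with hu_def
  set v : ℝ × ℝ → ℝ := fun p => py g p - e₂ p with hv_def
  have hpxg : ContDiff ℝ (⊤ : ℕ∞) (px g) := smooth_px hgsm
  have hpyg : ContDiff ℝ (⊤ : ℕ∞) (py g) := smooth_py hgsm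
  have husm : ContDiff ℝ (⊤ : ℕ∞) u := hpxg.sub he₁
  have hvsm : ContDiff ℝ (⊤ : ℕ∞) v := hpyg.sub he₂
  have hda₁ : Differentiable ℝ a₁ := ha₁.differentiable (by simp)
  have hda₂ : Differentiable ℝ a₂ := ha₂.differentiable (by simp)
  have hdg : Differentiable ℝ g := hgsm.differentiable (by simp)
  have hdu : Differentiable ℝ u := husm.differentiable (by simp)
  have hdv : Differentiable ℝ v := hvsm.differentiable (by simp)
  have hd0 : Differentiable ℝ (fun _ : ℝ × ℝ => (0:ℝ)) := differentiable_const 0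
  -- identify the component functions of B
  have hB1 : (fun r => (B r).1) =
      fun r : ℝ × ℝ × ℝ => a₁ (r.1, r.2.1) + r.2.2 * u (r.1, r.2.1) := by
    funext q
    have h := hB q.1 q.2.1 q.2.2
    simp only [show (q.1, q.2.1, q.2.2) = q from rfl] at h
    rw [h]
  have hB2 : (fun r => (B r).2.1) =
      fun r : ℝ × ℝ × ℝ => a₂ (r.1, r.2.1) + r.2.2 * v (r.1, r.2.1) := by
    funext q
    have h := hB q.1 q.2.1 q.2.2
    simp only [show (q.1, q.2.1, q.2.2) = q from rfl] at h
    rw [h]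
  have hB3 : (fun r => (B r).2.2) =
      fun r : ℝ × ℝ × ℝ => g (r.1, r.2.1) + r.2.2 * (0:ℝ) := by
    funext q
    have h := hB q.1 q.2.1 q.2.2
    simp only [show (q.1, q.2.1, q.2.2) = q from rfl] at h
    rw [h]; simp
  -- the formula for ⟨B, curl B⟩
  have hformula : ∀ x y t : ℝ, dot3 (B (x, y, t)) (curl3 B (x, y, t)) =
      ρ (x, y) + (g (x, y)) ^ 2 +
        t * (e₂ (x, y) * px g (x, y) - e₁ (x, y) * py g (x, y) +
          g (x, y) * (py e₁ (x, y) - px e₂ (x, y))) := by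
    intro x y t
    obtain ⟨p1a, p2a, p3a⟩ := pd_G a₁ u hda₁ hdu x y t
    obtain ⟨p1b, p2b, p3b⟩ := pd_G a₂ v hda₂ hdv x y t
    obtain ⟨p1c, p2c, p3c⟩ := pd_G g (fun _ => 0) hdg hd0 x y t
    have hpxv : px v (x, y) = px (py g) (x, y) - px e₂ (x, y) :=
      px_sub (hpyg.differentiable (by simp)) (he₂.differentiable (by simp)) (x, y)
    have hpyu : py u (x, y) = py (px g) (x, y) - py e₁ (x, y) :=
      py_sub (hpxg.differentiable (by simp)) (he₁.differentiable (by simp)) (x, y)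
    have hcl : px (py g) (x, y) = py (px g) (x, y) := clairaut hgsm (x, y)
    rw [curl3, hB1, hB2, hB3, p2c, p3b, p3a, p1c, p1b, p2a, hB x y t]
    simp only [dot3, px_zero, py_zero, hpxv, hpyu]
    have hρp := hρ (x, y)
    have hgp := hg (x, y)
    simp only [hu_def, hv_def]
    linear_combination (-1:ℝ) * hρp + (-(g (x, y))) * hgp + (t * g (x, y)) * hcl
  refine ⟨hformula, ?_⟩
  -- compactness argument
  rcases K.eq_empty_or_nonempty with hKe | hKne
  · exact ⟨1, one_pos, fun x y t hxy _ => absurd hxy (by simp [hKe])⟩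
  · set h : ℝ × ℝ → ℝ := fun p => ρ p + (g p) ^ 2 with hh_def
    set w : ℝ × ℝ → ℝ := fun p => e₂ p * px g p - e₁ p * py g p +
      g p * (py e₁ p - px e₂ p) with hw_def
    have hρc : Continuous ρ := by
      have : ρ = fun p => a₁ p * e₂ p - a₂ p * e₁ p := funext hρ
      rw [this]
      exact ((ha₁.continuous.mul he₂.continuous).sub
        (ha₂.continuous.mul he₁.continuous))
    have hhc : Continuous h := hρc.add (hgsm.continuous.pow 2)
    have hwc : Continuous w := by
      exact ((he₂.continuous.mul hpxg.continuous).sub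
          (he₁.continuous.mul hpyg.continuous)).add
        (hgsm.continuous.mul ((smooth_py he₁).continuous.sub
          (smooth_px he₂).continuous))
    obtain ⟨pc, hpc, hmin⟩ := hK.exists_isMinOn hKne hhc.continuousOn
    obtain ⟨pM, hpM, hmax⟩ := hK.exists_isMaxOn hKne (hwc.abs.continuousOn)
    set c : ℝ := h pc with hc_def
    set M : ℝ := |w pM| with hM_def
    have hc_pos : 0 < c := hpos pc hpc
    have hM_nonneg : 0 ≤ M := abs_nonneg _
    refine ⟨c / (2 * (M + 1)), by positivity, fun x y t hxy ht => ?_⟩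
    have h1 : c ≤ h (x, y) := hmin hxy
    have h2 : |w (x, y)| ≤ M := hmax hxy
    have h3 : |t * w (x, y)| ≤ (c / (2 * (M + 1))) * M := by
      rw [abs_mul]
      exact mul_le_mul ht h2 (abs_nonneg _) (by positivity)
    have h4 : -(c / (2 * (M + 1)) * M) ≤ t * w (x, y) := (abs_le.mp h3).1
    have h5 : c / (2 * (M + 1)) * M < c := by
      rw [div_mul_eq_mul_div, div_lt_iff₀ (by positivity)]
      nlinarith
    have key : dot3 (B (x, y, t)) (curl3 B (x, y, t)) = h (x, y) + t * w (x, y) := by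
      rw [hformula x y t]
    rw [key]
    have h6 : 0 < c - c / (2 * (M + 1)) * M := by linarith
    clear_value h w c M
    linarith
end
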